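/- Let (f₂M₁ ×_{f₁} M₂, F) be a proper doubly warped product Finsler manifold (neither f₁ nor f₂ constant) with vanishing Berwald curvature 𝐁 = 0. Then, since 𝐁^k_{αβλ} = −(1/f₂²) C²_{αβλ} g^{kh} ∂f₁²/∂x^h and 𝐁^γ_{ijk} = −(1/f₁²) C¹_{ijk} g^{αγ} ∂f₂²/∂u^α, both Cartan tensors C¹ and C² vanish, so F is Riemannian. -/

import Mathlib

/-- Partial derivative in the fiber variable. -/
noncomputable def pd {ι : Type*} [Fintype ι] [DecidableEq ι]
    (i : ι) (f : (ι → ℝ) → ℝ) (y : ι → ℝ) : ℝ :=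
  fderiv ℝ f y (Pi.single i 1)

/-- Partial derivative in the base variable of a two-argument function. -/
noncomputable def pdb {ι : Type*} [Fintype ι] [DecidableEq ι] {β : Type*}
    (i : ι) (f : (ι → ℝ) → β → ℝ) (x : ι → ℝ) (y : β) : ℝ :=
  fderiv ℝ (fun x' => f x' y) x (Pi.single i 1)

/-- Fundamental tensor `g_{ab} = (1/2)∂²F²/∂y^a∂y^b`. -/
noncomputable def fundG {ι : Type*} [Fintype ι] [DecidableEq ι]
    (Fsq : (ι → ℝ) → ℝ) (a b : ι) (y : ι → ℝ) : ℝ :=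
  (1 / 2) * pd a (pd b Fsq) y

/-- Cartan tensor `C_{abc} = (1/2)∂g_{ab}/∂y^c`. -/
noncomputable def cart {ι : Type*} [Fintype ι] [DecidableEq ι]
    (Fsq : (ι → ℝ) → ℝ) (a b c : ι) (y : ι → ℝ) : ℝ :=
  (1 / 2) * pd c (fundG Fsq a b) y

/-- Inverse fundamental tensor `g^{ab}` (matrix inverse). -/
noncomputable def ginvE {ι : Type*} [Fintype ι] [DecidableEq ι]
    (Fsq : (ι → ℝ) → ℝ) (a b : ι) (y : ι → ℝ) : ℝ :=
  (Matrix.of fun a' b' => fundG Fsq a' b' y)⁻¹ a b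

/-- Spray coefficients `G^a = (1/4)g^{ac}(∂²F²/∂y^c∂x^e y^e − ∂F²/∂x^c)`. -/
noncomputable def spray {ι : Type*} [Fintype ι] [DecidableEq ι]
    (Fsq : (ι → ℝ) → (ι → ℝ) → ℝ) (a : ι) (x y : ι → ℝ) : ℝ :=
  (1 / 4) * ∑ c, ginvE (Fsq x) a c y *
    ((∑ e, pdb e (fun x' y' => pd c (Fsq x') y') x y * y e) - pdb c Fsq x y)

/-! ### Auxiliary directional-derivative calculus -/

noncomputable def DP {E : Type*} [NormedAddCommGroup E] [NormedSpace ℝ E]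
    (z : E) (g : E → ℝ) : E → ℝ := fun p => fderiv ℝ g p z

section DPcalc
variable {E F : Type*} [NormedAddCommGroup E] [NormedSpace ℝ E]
  [NormedAddCommGroup F] [NormedSpace ℝ F]

lemma dp_contDiffOn {S : Set E} (hS : IsOpen S) {g : E → ℝ}
    (hg : ContDiffOn ℝ (⊤ : ℕ∞) g S) (z : E) : ContDiffOn ℝ (⊤ : ℕ∞) (DP z g) S :=
  (hg.fderiv_of_isOpen (m := (⊤ : ℕ∞)) hS (by simp)).clm_apply contDiffOn_const

lemma diffAt_of_contDiffOn {S : Set E} (hS : IsOpen S) {g : E → ℝ}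
    (hg : ContDiffOn ℝ (⊤ : ℕ∞) g S) {p : E} (hp : p ∈ S) : DifferentiableAt ℝ g p :=
  ((hg.contDiffAt (hS.mem_nhds hp)).differentiableAt (by simp))

lemma dp_congr_on {S : Set E} (hS : IsOpen S) {g₁ g₂ : E → ℝ}
    (h : ∀ q ∈ S, g₁ q = g₂ q) {p : E} (hp : p ∈ S) (z : E) :
    DP z g₁ p = DP z g₂ p := by
  have : g₁ =ᶠ[nhds p] g₂ := Filter.eventuallyEq_of_mem (hS.mem_nhds hp) h
  unfold DP
  rw [this.fderiv_eq]

lemma dp_zero (g : E → ℝ) (p : E) : DP 0 g p = 0 := by simp [DP]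

lemma dp_const (c : ℝ) (p z : E) : DP z (fun _ => c) p = 0 := by
  simp [DP]

lemma dp_add (g₁ g₂ : E → ℝ) {p : E} (h₁ : DifferentiableAt ℝ g₁ p)
    (h₂ : DifferentiableAt ℝ g₂ p) (z : E) :
    DP z (fun q => g₁ q + g₂ q) p = DP z g₁ p + DP z g₂ p := by
  unfold DP; rw [fderiv_fun_add h₁ h₂]; rfl

lemma dp_mul (g₁ g₂ : E → ℝ) {p : E} (h₁ : DifferentiableAt ℝ g₁ p)
    (h₂ : DifferentiableAt ℝ g₂ p) (z : E) :
    DP z (fun q => g₁ q * g₂ q) p = g₁ p * DP z g₂ p + g₂ p * DP z g₁ p := by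
  unfold DP; rw [fderiv_fun_mul h₁ h₂]; simp [smul_eq_mul]

lemma dp_comp_clm (L : E →L[ℝ] F) (g : F → ℝ) {p : E}
    (hg : DifferentiableAt ℝ g (L p)) (z : E) :
    DP z (fun q => g (L q)) p = fderiv ℝ g (L p) (L z) := by
  unfold DP
  have : (fun q => g (L q)) = g ∘ L := rfl
  rw [this, (hg.hasFDerivAt.comp p L.hasFDerivAt).fderiv]; rfl

lemma dp_comp_clm' (L : E →L[ℝ] F) (g : F → ℝ) {p : E}
    (hg : DifferentiableAt ℝ g (L p)) (z : E) :
    DP z (fun q => g (L q)) p = DP (L z) g (L p) := dp_comp_clm L g hg z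

lemma fderiv_slice_right (g : E × F → ℝ) {x : E} {y : F}
    (hg : DifferentiableAt ℝ g (x,y)) (v : F) :
    fderiv ℝ (fun y' => g (x, y')) y v = fderiv ℝ g (x,y) (0, v) := by
  have h := (hg.hasFDerivAt.comp y (hasFDerivAt_prodMk_right x y)).fderiv
  have h2 : (fun y' => g (x, y')) = g ∘ Prod.mk x := rfl
  rw [h2, h]; rfl

lemma contDiffOn_slice_right' {σ : Type*} [Fintype σ]
    {g : ((σ → ℝ) × (σ → ℝ)) → ℝ} {S : Set ((σ → ℝ) × (σ → ℝ))}
    (hg : ContDiffOn ℝ (⊤ : ℕ∞) g S) (x : σ → ℝ) :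
    ContDiffOn ℝ (⊤ : ℕ∞) (fun y => g (x, y)) {y | (x, y) ∈ S} := by
  apply hg.comp (f := fun y => (x, y))
  · exact (contDiff_prodMk_right x).contDiffOn
  · intro y hy; exact hy

lemma fderiv_slice_left (g : E × F → ℝ) {x : E} {y : F}
    (hg : DifferentiableAt ℝ g (x,y)) (v : E) :
    fderiv ℝ (fun x' => g (x', y)) x v = fderiv ℝ g (x,y) (v, 0) := by
  have h := (hg.hasFDerivAt.comp x (hasFDerivAt_prodMk_left (𝕜 := ℝ) x y)).fderiv
  have h2 : (fun x' => g (x', y)) = g ∘ (fun e => (e, y)) := rfl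
  rw [h2, h]; rfl

end DPcalc

/-! ### Matrix smoothness and algebra helpers -/

section MatrixHelp
variable {E : Type*} [NormedAddCommGroup E] [NormedSpace ℝ E]

lemma contDiffOn_finset_prod {ι : Type*} {S : Set E} {f : ι → E → ℝ} (s : Finset ι)
    (h : ∀ i ∈ s, ContDiffOn ℝ (⊤ : ℕ∞) (f i) S) :
    ContDiffOn ℝ (⊤ : ℕ∞) (fun p => ∏ i ∈ s, f i p) S := by
  classical
  induction s using Finset.induction with
  | empty => simpa using contDiffOn_const
  | insert a s hni ih =>
    simp only [Finset.prod_insert hni]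
    exact (h a (Finset.mem_insert_self a s)).mul
      (ih fun i hi => h i (Finset.mem_insert_of_mem hi))

lemma contDiffOn_det {n : Type*} [Fintype n] [DecidableEq n] {S : Set E}
    {A : E → Matrix n n ℝ} (h : ∀ i j, ContDiffOn ℝ (⊤ : ℕ∞) (fun p => A p i j) S) :
    ContDiffOn ℝ (⊤ : ℕ∞) (fun p => (A p).det) S := by
  have : (fun p => (A p).det)
      = fun p => ∑ σ : Equiv.Perm n, ((Equiv.Perm.sign σ : ℤ) : ℝ) * ∏ i, A p (σ i) i := by
    funext p; rw [Matrix.det_apply]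
    congr 1; funext σ
    rw [Units.smul_def, zsmul_eq_mul]
  rw [this]
  apply ContDiffOn.sum
  intro σ _
  exact (contDiffOn_finset_prod _ (fun i _ => h (σ i) i)).const_smul ((Equiv.Perm.sign _ : ℤ) : ℝ)

lemma contDiffOn_inv_entry {n : Type*} [Fintype n] [DecidableEq n] {S : Set E}
    {A : E → Matrix n n ℝ}
    (h : ∀ i j, ContDiffOn ℝ (⊤ : ℕ∞) (fun p => A p i j) S)
    (hdet : ∀ p ∈ S, (A p).det ≠ 0) (i j : n) :
    ContDiffOn ℝ (⊤ : ℕ∞) (fun p => (A p)⁻¹ i j) S := by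
  have heq : ∀ p, (A p)⁻¹ i j = Ring.inverse (A p).det * (A p).adjugate i j := by
    intro p; rw [Matrix.inv_def]; rfl
  simp only [heq]
  have hdet' : ContDiffOn ℝ (⊤ : ℕ∞) (fun p => (A p).det) S := contDiffOn_det h
  have h1 : ContDiffOn ℝ (⊤ : ℕ∞) (fun p => Ring.inverse (A p).det) S := by
    have : ∀ p ∈ S, Ring.inverse (A p).det = ((A p).det)⁻¹ := by
      intro p hp; simp [Ring.inverse_eq_inv']
    exact ContDiffOn.congr (hdet'.inv hdet) this
  refine h1.mul ?_
  have : ∀ p, (A p).adjugate i j = ((A p).updateRow j (Pi.single i 1)).det :=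
    fun p => Matrix.adjugate_apply _ _ _
  simp only [this]
  apply contDiffOn_det
  intro a b
  simp only [Matrix.updateRow_apply]
  by_cases hab : a = j
  · simp [hab]; exact contDiffOn_const
  · simp [hab]; exact h a b

end MatrixHelp

lemma det_ne_zero_of_pos {n : Type*} [Fintype n] [DecidableEq n] {M : Matrix n n ℝ}
    (h : ∀ z : n → ℝ, z ≠ 0 → 0 < ∑ i, ∑ j, M i j * z i * z j) : M.det ≠ 0 := by
  intro hdet
  obtain ⟨v, hv, hMv⟩ := Matrix.exists_mulVec_eq_zero_iff.mpr hdet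
  have h0 : ∑ i, ∑ j, M i j * v i * v j = 0 := by
    have : ∀ i, v i * (M.mulVec v i) = 0 := by intro i; rw [hMv]; simp
    have hsum : ∑ i, v i * M.mulVec v i = 0 := by simp [this]
    rw [← hsum]
    congr 1; funext i
    rw [Matrix.mulVec, dotProduct, Finset.mul_sum]
    congr 1; funext j; ring
  exact absurd h0 (ne_of_gt (h v hv))

lemma smul_inv_eq {n : Type*} [Fintype n] [DecidableEq n] {c : ℝ} (hc : c ≠ 0)
    {M : Matrix n n ℝ} (hM : M.det ≠ 0) : (c • M)⁻¹ = c⁻¹ • M⁻¹ := by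
  apply Matrix.inv_eq_right_inv
  rw [Matrix.smul_mul, Matrix.mul_smul, smul_smul, Matrix.mul_nonsing_inv M (Ne.isUnit hM)]
  rw [mul_inv_cancel₀ hc]; simp

lemma fromBlocks_inv_eq {n m : Type*} [Fintype n] [DecidableEq n] [Fintype m] [DecidableEq m]
    {A : Matrix n n ℝ} {D : Matrix m m ℝ} (hA : A.det ≠ 0) (hD : D.det ≠ 0) :
    (Matrix.fromBlocks A 0 0 D)⁻¹ = Matrix.fromBlocks A⁻¹ 0 0 D⁻¹ := by
  apply Matrix.inv_eq_right_inv
  rw [Matrix.fromBlocks_multiply]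
  simp [Matrix.mul_nonsing_inv A (Ne.isUnit hA), Matrix.mul_nonsing_inv D (Ne.isUnit hD),
    Matrix.fromBlocks_one]

lemma vec_eq_zero_of_inv_mulVec {n : Type*} [Fintype n] [DecidableEq n]
    {N : Matrix n n ℝ} (hN : N.det ≠ 0) {d : n → ℝ}
    (h : ∀ k, ∑ h', N⁻¹ k h' * d h' = 0) : d = 0 := by
  have hmv : N⁻¹.mulVec d = 0 := by
    funext k; simpa [Matrix.mulVec, dotProduct] using h k
  have := congrArg (fun v => N.mulVec v) hmv
  simpa [Matrix.mulVec_mulVec, Matrix.mul_nonsing_inv N (Ne.isUnit hN)] using this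

lemma clm_eq_zero_of_single {n : Type*} [Fintype n] [DecidableEq n]
    (L : ((n → ℝ)) →L[ℝ] ℝ) (h : ∀ i, L (Pi.single i 1) = 0) (v : n → ℝ) : L v = 0 := by
  have hv : v = ∑ i, v i • (Pi.single i 1 : n → ℝ) := by
    funext j
    rw [Finset.sum_apply]
    simp [Pi.single_apply, eq_comm]
  rw [hv, map_sum]
  simp [h]

/-! ### Sum-type projections -/

section sumproj
variable {ι κ : Type*} [Fintype ι] [DecidableEq ι] [Fintype κ] [DecidableEq κ]

noncomputable def prL (ι κ : Type*) [Fintype ι] [DecidableEq ι] [Fintype κ] [DecidableEq κ] :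
    ((ι ⊕ κ) → ℝ) →L[ℝ] (ι → ℝ) :=
  ContinuousLinearMap.pi fun i => ContinuousLinearMap.proj (Sum.inl i)

noncomputable def prR (ι κ : Type*) [Fintype ι] [DecidableEq ι] [Fintype κ] [DecidableEq κ] :
    ((ι ⊕ κ) → ℝ) →L[ℝ] (κ → ℝ) :=
  ContinuousLinearMap.pi fun j => ContinuousLinearMap.proj (Sum.inr j)

@[simp] lemma prL_apply (w : (ι ⊕ κ) → ℝ) : prL ι κ w = w ∘ Sum.inl := rfl
@[simp] lemma prR_apply (w : (ι ⊕ κ) → ℝ) : prR ι κ w = w ∘ Sum.inr := rfl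

lemma prL_single_inl (i : ι) : prL ι κ (Pi.single (Sum.inl i) 1) = Pi.single i 1 := by
  funext j; simp [prL, Pi.single_apply]

lemma prL_single_inr (j : κ) : prL ι κ (Pi.single (Sum.inr j) 1) = 0 := by
  funext i; simp [prL, Pi.single_apply]

lemma prR_single_inr (j : κ) : prR ι κ (Pi.single (Sum.inr j) 1) = Pi.single j 1 := by
  funext i; simp [prR, Pi.single_apply]

lemma prR_single_inl (i : ι) : prR ι κ (Pi.single (Sum.inl i) 1) = 0 := by
  funext j; simp [prR, Pi.single_apply]

end sumproj
/-! ### Joint function and its directional derivatives -/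

noncomputable def JJ {σ : Type*} (F : (σ → ℝ) → (σ → ℝ) → ℝ) :
    ((σ → ℝ) × (σ → ℝ)) → ℝ := fun p => F p.1 p.2

noncomputable def Dv {σ : Type*} [Fintype σ] [DecidableEq σ] (e : σ)
    (g : ((σ → ℝ) × (σ → ℝ)) → ℝ) : ((σ → ℝ) × (σ → ℝ)) → ℝ :=
  DP (0, Pi.single e 1) g

noncomputable def Dx {σ : Type*} [Fintype σ] [DecidableEq σ] (e : σ)
    (g : ((σ → ℝ) × (σ → ℝ)) → ℝ) : ((σ → ℝ) × (σ → ℝ)) → ℝ :=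
  DP (Pi.single e 1, 0) g

noncomputable def MM {σ : Type*} [Fintype σ] [DecidableEq σ]
    (F : (σ → ℝ) → (σ → ℝ) → ℝ) (p : (σ → ℝ) × (σ → ℝ)) : Matrix σ σ ℝ :=
  Matrix.of fun i j => (1/2 : ℝ) * Dv i (Dv j (JJ F)) p

section Link
variable {σ : Type*} [Fintype σ] [DecidableEq σ] {F : (σ → ℝ) → (σ → ℝ) → ℝ}
  {S : Set ((σ → ℝ) × (σ → ℝ))}

lemma L_pd (hS : IsOpen S) (hsm : ContDiffOn ℝ (⊤ : ℕ∞) (JJ F) S) {x y : σ → ℝ}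
    (hp : (x, y) ∈ S) (c : σ) : pd c (F x) y = Dv c (JJ F) (x, y) := by
  have hd := diffAt_of_contDiffOn hS hsm hp
  have h0 : pd c (F x) y = fderiv ℝ (fun y' => JJ F (x, y')) y (Pi.single c 1) := rfl
  rw [h0, fderiv_slice_right _ hd]; rfl

lemma L_pd_slice (hS : IsOpen S) {g : ((σ → ℝ) × (σ → ℝ)) → ℝ}
    (hg : ContDiffOn ℝ (⊤ : ℕ∞) g S) {x y : σ → ℝ} (hp : (x, y) ∈ S) (c : σ) :
    pd c (fun y' => g (x, y')) y = Dv c g (x, y) := by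
  have hd := diffAt_of_contDiffOn hS hg hp
  have h0 : pd c (fun y' => g (x, y')) y = fderiv ℝ (fun y' => g (x, y')) y (Pi.single c 1) := rfl
  rw [h0, fderiv_slice_right _ hd]; rfl

lemma L_fundG (hS : IsOpen S) (hsm : ContDiffOn ℝ (⊤ : ℕ∞) (JJ F) S) {x y : σ → ℝ}
    (hp : (x, y) ∈ S) (a c : σ) : fundG (F x) a c y = MM F (x, y) a c := by
  have hU : IsOpen {y' | (x, y') ∈ S} := hS.preimage (Continuous.prodMk_right x)
  have hc : (pd c (F x)) =ᶠ[nhds y] (fun y' => Dv c (JJ F) (x, y')) :=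
    Filter.eventuallyEq_of_mem (hU.mem_nhds hp) (fun y' hy' => L_pd hS hsm hy' c)
  have h1 : pd a (pd c (F x)) y = pd a (fun y' => Dv c (JJ F) (x, y')) y :=
    congrArg (fun L : ((σ → ℝ) →L[ℝ] ℝ) => L (Pi.single a 1)) hc.fderiv_eq
  unfold fundG
  rw [h1, L_pd_slice (g := Dv c (JJ F)) hS (dp_contDiffOn hS hsm _) hp a]
  rfl

lemma L_cart (hS : IsOpen S) (hsm : ContDiffOn ℝ (⊤ : ℕ∞) (JJ F) S) {x y : σ → ℝ}
    (hp : (x, y) ∈ S) (a c d : σ) :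
    cart (F x) a c d y = (1/4 : ℝ) * Dv d (Dv a (Dv c (JJ F))) (x, y) := by
  have hU : IsOpen {y' | (x, y') ∈ S} := hS.preimage (Continuous.prodMk_right x)
  have hc : (fundG (F x) a c) =ᶠ[nhds y]
      (fun y' => (1/2 : ℝ) * Dv a (Dv c (JJ F)) (x, y')) :=
    Filter.eventuallyEq_of_mem (hU.mem_nhds hp)
      (fun y' hy' => by rw [L_fundG hS hsm hy' a c]; rfl)
  have h1 : pd d (fundG (F x) a c) y
      = pd d (fun y' => (1/2 : ℝ) * Dv a (Dv c (JJ F)) (x, y')) y :=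
    congrArg (fun L : ((σ → ℝ) →L[ℝ] ℝ) => L (Pi.single d 1)) hc.fderiv_eq
  have hg2 : ContDiffOn ℝ (⊤ : ℕ∞) (Dv a (Dv c (JJ F))) S :=
    dp_contDiffOn hS (dp_contDiffOn hS hsm _) _
  have hd2 : DifferentiableAt ℝ (fun y' => Dv a (Dv c (JJ F)) (x, y')) y := by
    have hd := diffAt_of_contDiffOn hS hg2 hp
    exact (hd.comp y (DifferentiableAt.prodMk (differentiableAt_const x) differentiableAt_id))
  have h2 : pd d (fun y' => (1/2 : ℝ) * Dv a (Dv c (JJ F)) (x, y')) y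
      = (1/2 : ℝ) * pd d (fun y' => Dv a (Dv c (JJ F)) (x, y')) y := by
    have h := fderiv_const_mul hd2 (1/2 : ℝ)
    have h' := congrArg (fun L : ((σ → ℝ) →L[ℝ] ℝ) => L (Pi.single d 1)) h
    simpa [pd] using h'
  unfold cart
  rw [h1, h2, L_pd_slice hS hg2 hp d]
  ring

lemma L_ginv (hS : IsOpen S) (hsm : ContDiffOn ℝ (⊤ : ℕ∞) (JJ F) S) {x y : σ → ℝ}
    (hp : (x, y) ∈ S) (a c : σ) : ginvE (F x) a c y = (MM F (x, y))⁻¹ a c := by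
  have : (Matrix.of fun a' c' => fundG (F x) a' c' y) = MM F (x, y) := by
    ext i j; exact L_fundG hS hsm hp i j
  unfold ginvE
  rw [this]

lemma L_pdb_mix (hS : IsOpen S) (hsm : ContDiffOn ℝ (⊤ : ℕ∞) (JJ F) S) {x y : σ → ℝ}
    (hfull : ∀ x', (x', y) ∈ S) (e c : σ) :
    pdb e (fun x' y' => pd c (F x') y') x y = Dx e (Dv c (JJ F)) (x, y) := by
  have hfx : (fun x' => pd c (F x') y) = fun x' => Dv c (JJ F) (x', y) :=
    funext fun x' => L_pd hS hsm (hfull x') c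
  have hd : DifferentiableAt ℝ (Dv c (JJ F)) (x, y) :=
    diffAt_of_contDiffOn hS (dp_contDiffOn hS hsm _) (hfull x)
  have h0 : pdb e (fun x' y' => pd c (F x') y') x y
      = fderiv ℝ (fun x' => pd c (F x') y) x (Pi.single e 1) := rfl
  rw [h0, hfx, fderiv_slice_left _ hd]; rfl

lemma L_pdb (hS : IsOpen S) (hsm : ContDiffOn ℝ (⊤ : ℕ∞) (JJ F) S) {x y : σ → ℝ}
    (hp : (x, y) ∈ S) (c : σ) : pdb c F x y = Dx c (JJ F) (x, y) := by
  have hd : DifferentiableAt ℝ (JJ F) (x, y) := diffAt_of_contDiffOn hS hsm hp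
  have h0 : pdb c F x y = fderiv ℝ (fun x' => JJ F (x', y)) x (Pi.single c 1) := rfl
  rw [h0, fderiv_slice_left _ hd]; rfl

lemma L_spray (hS : IsOpen S) (hsm : ContDiffOn ℝ (⊤ : ℕ∞) (JJ F) S) {x y : σ → ℝ}
    (hfull : ∀ x', (x', y) ∈ S) (a : σ) :
    spray F a x y = (1/4 : ℝ) * ∑ c, (MM F (x, y))⁻¹ a c *
      ((∑ e, Dx e (Dv c (JJ F)) (x, y) * y e) - Dx c (JJ F) (x, y)) := by
  unfold spray
  congr 1
  apply Finset.sum_congr rfl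
  intro c _
  rw [L_ginv hS hsm (hfull x) a c, L_pdb hS hsm (hfull x) c]
  congr 2
  apply Finset.sum_congr rfl
  intro e _
  rw [L_pdb_mix hS hsm hfull e c]

end Link

/-! ### Warp-product calculus -/

lemma dp_warp_term {E Q T : Type*} [NormedAddCommGroup E] [NormedSpace ℝ E]
    [NormedAddCommGroup Q] [NormedSpace ℝ Q] [NormedAddCommGroup T] [NormedSpace ℝ T]
    (φ : T → ℝ) (hφ : Differentiable ℝ φ) (Lf : E →L[ℝ] T) (Λ : E →L[ℝ] Q)
    (g : Q → ℝ) {p : E} (hg : DifferentiableAt ℝ g (Λ p)) (z : E) :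
    DP z (fun q => φ (Lf q) * g (Λ q)) p
      = φ (Lf p) * DP (Λ z) g (Λ p) + g (Λ p) * fderiv ℝ φ (Lf p) (Lf z) := by
  have h₁ : DifferentiableAt ℝ (fun q => φ (Lf q)) p :=
    ((hφ (Lf p)).comp p Lf.differentiableAt)
  have h₂ : DifferentiableAt ℝ (fun q => g (Λ q)) p := (hg.comp p Λ.differentiableAt)
  rw [dp_mul _ _ h₁ h₂ z, dp_comp_clm' Λ g hg z, dp_comp_clm Lf φ (hφ _) z]

def SS (n : ℕ) : Set ((Fin n → ℝ) × (Fin n → ℝ)) := {p | p.2 ≠ 0}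

lemma isOpen_SS (n : ℕ) : IsOpen (SS n) :=
  isOpen_ne.preimage continuous_snd

def SW (n₁ n₂ : ℕ) : Set (((Fin n₁ ⊕ Fin n₂) → ℝ) × ((Fin n₁ ⊕ Fin n₂) → ℝ)) :=
  {p | p.2 ∘ Sum.inl ≠ 0 ∧ p.2 ∘ Sum.inr ≠ 0}

lemma isOpen_SW (n₁ n₂ : ℕ) : IsOpen (SW n₁ n₂) := by
  have h1 : IsOpen {p : ((Fin n₁ ⊕ Fin n₂) → ℝ) × ((Fin n₁ ⊕ Fin n₂) → ℝ) |
      p.2 ∘ Sum.inl ≠ 0} :=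
    isOpen_ne.preimage ((prL (Fin n₁) (Fin n₂)).continuous.comp continuous_snd)
  have h2 : IsOpen {p : ((Fin n₁ ⊕ Fin n₂) → ℝ) × ((Fin n₁ ⊕ Fin n₂) → ℝ) |
      p.2 ∘ Sum.inr ≠ 0} :=
    isOpen_ne.preimage ((prR (Fin n₁) (Fin n₂)).continuous.comp continuous_snd)
  exact h1.inter h2

noncomputable def Lam1 (n₁ n₂ : ℕ) :
    ((((Fin n₁ ⊕ Fin n₂) → ℝ) × ((Fin n₁ ⊕ Fin n₂) → ℝ))) →L[ℝ]
      ((Fin n₁ → ℝ) × (Fin n₁ → ℝ)) :=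
  (prL (Fin n₁) (Fin n₂)).prodMap (prL (Fin n₁) (Fin n₂))

noncomputable def Lam2 (n₁ n₂ : ℕ) :
    ((((Fin n₁ ⊕ Fin n₂) → ℝ) × ((Fin n₁ ⊕ Fin n₂) → ℝ))) →L[ℝ]
      ((Fin n₂ → ℝ) × (Fin n₂ → ℝ)) :=
  (prR (Fin n₁) (Fin n₂)).prodMap (prR (Fin n₁) (Fin n₂))

section Warp
variable {n₁ n₂ : ℕ}
  {F₁sq : (Fin n₁ → ℝ) → (Fin n₁ → ℝ) → ℝ}
  {F₂sq : (Fin n₂ → ℝ) → (Fin n₂ → ℝ) → ℝ}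
  {f₁ : (Fin n₁ → ℝ) → ℝ} {f₂ : (Fin n₂ → ℝ) → ℝ}
  {WFsq : ((Fin n₁ ⊕ Fin n₂) → ℝ) → ((Fin n₁ ⊕ Fin n₂) → ℝ) → ℝ}

lemma JW_eq (hWFsq : ∀ b w, WFsq b w =
      (f₂ (b ∘ Sum.inr)) ^ 2 * F₁sq (b ∘ Sum.inl) (w ∘ Sum.inl)
        + (f₁ (b ∘ Sum.inl)) ^ 2 * F₂sq (b ∘ Sum.inr) (w ∘ Sum.inr)) :
    JJ WFsq = fun q => (fun t => f₂ t ^ 2) ((prR (Fin n₁) (Fin n₂)).comp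
        (ContinuousLinearMap.fst ℝ _ _) q) * JJ F₁sq (Lam1 n₁ n₂ q)
      + (fun t => f₁ t ^ 2) ((prL (Fin n₁) (Fin n₂)).comp
        (ContinuousLinearMap.fst ℝ _ _) q) * JJ F₂sq (Lam2 n₁ n₂ q) := by
  funext q
  exact hWFsq q.1 q.2

variable (hf₁sm : ContDiff ℝ (⊤ : ℕ∞) f₁) (hf₂sm : ContDiff ℝ (⊤ : ℕ∞) f₂)
  (h₁sm : ContDiffOn ℝ (⊤ : ℕ∞) (JJ F₁sq) (SS n₁))
  (h₂sm : ContDiffOn ℝ (⊤ : ℕ∞) (JJ F₂sq) (SS n₂))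
  (hWFsq : ∀ b w, WFsq b w =
      (f₂ (b ∘ Sum.inr)) ^ 2 * F₁sq (b ∘ Sum.inl) (w ∘ Sum.inl)
        + (f₁ (b ∘ Sum.inl)) ^ 2 * F₂sq (b ∘ Sum.inr) (w ∘ Sum.inr))

lemma mapsTo_Lam1 : ∀ p ∈ SW n₁ n₂, Lam1 n₁ n₂ p ∈ SS n₁ := fun _ hp => hp.1

lemma mapsTo_Lam2 : ∀ p ∈ SW n₁ n₂, Lam2 n₁ n₂ p ∈ SS n₂ := fun _ hp => hp.2

include hf₁sm hf₂sm h₁sm h₂sm hWFsq in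
lemma JW_smooth : ContDiffOn ℝ (⊤ : ℕ∞) (JJ WFsq) (SW n₁ n₂) := by
  rw [JW_eq hWFsq]
  have c1 : ContDiffOn ℝ (⊤ : ℕ∞) (fun q => JJ F₁sq (Lam1 n₁ n₂ q)) (SW n₁ n₂) :=
    h₁sm.comp ((Lam1 n₁ n₂).contDiff.contDiffOn) mapsTo_Lam1
  have c2 : ContDiffOn ℝ (⊤ : ℕ∞) (fun q => JJ F₂sq (Lam2 n₁ n₂ q)) (SW n₁ n₂) :=
    h₂sm.comp ((Lam2 n₁ n₂).contDiff.contDiffOn) mapsTo_Lam2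
  have p2 : ContDiff ℝ (⊤ : ℕ∞) (fun q : (((Fin n₁ ⊕ Fin n₂) → ℝ) × ((Fin n₁ ⊕ Fin n₂) → ℝ)) =>
      f₂ ((prR (Fin n₁) (Fin n₂)).comp (ContinuousLinearMap.fst ℝ _ _) q) ^ 2) :=
    (hf₂sm.comp (ContinuousLinearMap.contDiff _)).pow 2
  have p1 : ContDiff ℝ (⊤ : ℕ∞) (fun q : (((Fin n₁ ⊕ Fin n₂) → ℝ) × ((Fin n₁ ⊕ Fin n₂) → ℝ)) =>
      f₁ ((prL (Fin n₁) (Fin n₂)).comp (ContinuousLinearMap.fst ℝ _ _) q) ^ 2) :=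
    (hf₁sm.comp (ContinuousLinearMap.contDiff _)).pow 2
  exact (p2.contDiffOn.mul c1).add (p1.contDiffOn.mul c2)

include hf₁sm hf₂sm h₁sm h₂sm hWFsq in
lemma dpJW {p : (((Fin n₁ ⊕ Fin n₂) → ℝ) × ((Fin n₁ ⊕ Fin n₂) → ℝ))}
    (hp : p ∈ SW n₁ n₂) (z : (((Fin n₁ ⊕ Fin n₂) → ℝ) × ((Fin n₁ ⊕ Fin n₂) → ℝ))) :
    DP z (JJ WFsq) p
      = (f₂ (prR (Fin n₁) (Fin n₂) p.1) ^ 2 * DP (Lam1 n₁ n₂ z) (JJ F₁sq) (Lam1 n₁ n₂ p)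
          + JJ F₁sq (Lam1 n₁ n₂ p) * fderiv ℝ (fun t => f₂ t ^ 2)
              (prR (Fin n₁) (Fin n₂) p.1) (prR (Fin n₁) (Fin n₂) z.1))
      + (f₁ (prL (Fin n₁) (Fin n₂) p.1) ^ 2 * DP (Lam2 n₁ n₂ z) (JJ F₂sq) (Lam2 n₁ n₂ p)
          + JJ F₂sq (Lam2 n₁ n₂ p) * fderiv ℝ (fun t => f₁ t ^ 2)
              (prL (Fin n₁) (Fin n₂) p.1) (prL (Fin n₁) (Fin n₂) z.1)) := by
  have hg1 : DifferentiableAt ℝ (JJ F₁sq) (Lam1 n₁ n₂ p) :=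
    diffAt_of_contDiffOn (isOpen_SS n₁) h₁sm (mapsTo_Lam1 p hp)
  have hg2 : DifferentiableAt ℝ (JJ F₂sq) (Lam2 n₁ n₂ p) :=
    diffAt_of_contDiffOn (isOpen_SS n₂) h₂sm (mapsTo_Lam2 p hp)
  have hφ₂ : Differentiable ℝ (fun t => f₂ t ^ 2) :=
    (hf₂sm.pow 2).differentiable (by simp)
  have hφ₁ : Differentiable ℝ (fun t => f₁ t ^ 2) :=
    (hf₁sm.pow 2).differentiable (by simp)
  have hA : DifferentiableAt ℝ (fun q => (fun t => f₂ t ^ 2)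
      ((prR (Fin n₁) (Fin n₂)).comp (ContinuousLinearMap.fst ℝ _ _) q)
      * JJ F₁sq (Lam1 n₁ n₂ q)) p :=
    ((hφ₂ _).comp p (ContinuousLinearMap.differentiableAt _)).mul
      (hg1.comp p (Lam1 n₁ n₂).differentiableAt)
  have hB : DifferentiableAt ℝ (fun q => (fun t => f₁ t ^ 2)
      ((prL (Fin n₁) (Fin n₂)).comp (ContinuousLinearMap.fst ℝ _ _) q)
      * JJ F₂sq (Lam2 n₁ n₂ q)) p :=
    ((hφ₁ _).comp p (ContinuousLinearMap.differentiableAt _)).mul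
      (hg2.comp p (Lam2 n₁ n₂).differentiableAt)
  have h0 : DP z (JJ WFsq) p = DP z (fun q => (fun t => f₂ t ^ 2)
      ((prR (Fin n₁) (Fin n₂)).comp (ContinuousLinearMap.fst ℝ _ _) q)
      * JJ F₁sq (Lam1 n₁ n₂ q)
      + (fun t => f₁ t ^ 2)
      ((prL (Fin n₁) (Fin n₂)).comp (ContinuousLinearMap.fst ℝ _ _) q)
      * JJ F₂sq (Lam2 n₁ n₂ q)) p :=
    congrArg (fun g => DP z g p) (JW_eq hWFsq)
  rw [h0, dp_add _ _ hA hB z,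
    dp_warp_term _ hφ₂ _ _ _ hg1 z, dp_warp_term _ hφ₁ _ _ _ hg2 z]
  rfl

end Warp

section Warp2
variable {n₁ n₂ : ℕ}
  {F₁sq : (Fin n₁ → ℝ) → (Fin n₁ → ℝ) → ℝ}
  {F₂sq : (Fin n₂ → ℝ) → (Fin n₂ → ℝ) → ℝ}
  {f₁ : (Fin n₁ → ℝ) → ℝ} {f₂ : (Fin n₂ → ℝ) → ℝ}
  {WFsq : ((Fin n₁ ⊕ Fin n₂) → ℝ) → ((Fin n₁ ⊕ Fin n₂) → ℝ) → ℝ}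

lemma Lam1_app (z : (((Fin n₁ ⊕ Fin n₂) → ℝ) × ((Fin n₁ ⊕ Fin n₂) → ℝ))) :
    Lam1 n₁ n₂ z = (prL (Fin n₁) (Fin n₂) z.1, prL (Fin n₁) (Fin n₂) z.2) := rfl

lemma Lam2_app (z : (((Fin n₁ ⊕ Fin n₂) → ℝ) × ((Fin n₁ ⊕ Fin n₂) → ℝ))) :
    Lam2 n₁ n₂ z = (prR (Fin n₁) (Fin n₂) z.1, prR (Fin n₁) (Fin n₂) z.2) := rfl


lemma single_inl_comp_inl (h : Fin n₁) :
    (Pi.single (Sum.inl h) (1:ℝ) : (Fin n₁ ⊕ Fin n₂) → ℝ) ∘ Sum.inl = Pi.single h 1 := by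
  funext j; simp [Pi.single_apply]

lemma single_inl_comp_inr (h : Fin n₁) :
    (Pi.single (Sum.inl h) (1:ℝ) : (Fin n₁ ⊕ Fin n₂) → ℝ) ∘ Sum.inr = 0 := by
  funext j; simp [Pi.single_apply]

lemma single_inr_comp_inr (γ : Fin n₂) :
    (Pi.single (Sum.inr γ) (1:ℝ) : (Fin n₁ ⊕ Fin n₂) → ℝ) ∘ Sum.inr = Pi.single γ 1 := by
  funext j; simp [Pi.single_apply]

lemma single_inr_comp_inl (γ : Fin n₂) :
    (Pi.single (Sum.inr γ) (1:ℝ) : (Fin n₁ ⊕ Fin n₂) → ℝ) ∘ Sum.inl = 0 := by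
  funext j; simp [Pi.single_apply]

lemma Lam1_vinl (h : Fin n₁) :
    Lam1 n₁ n₂ (0, Pi.single (Sum.inl h) 1) = (0, Pi.single h 1) := by
  rw [Lam1_app]; simp [single_inl_comp_inl]

lemma Lam1_vinr (γ : Fin n₂) :
    Lam1 n₁ n₂ (0, Pi.single (Sum.inr γ) 1) = 0 := by
  rw [Lam1_app]; simp [single_inr_comp_inl]

lemma Lam2_vinr (γ : Fin n₂) :
    Lam2 n₁ n₂ (0, Pi.single (Sum.inr γ) 1) = (0, Pi.single γ 1) := by
  rw [Lam2_app]; simp [single_inr_comp_inr]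

lemma Lam2_vinl (h : Fin n₁) :
    Lam2 n₁ n₂ (0, Pi.single (Sum.inl h) 1) = 0 := by
  rw [Lam2_app]; simp [single_inl_comp_inr]

lemma Lam1_binl (j : Fin n₁) :
    Lam1 n₁ n₂ (Pi.single (Sum.inl j) 1, 0) = (Pi.single j 1, 0) := by
  rw [Lam1_app]; simp [single_inl_comp_inl]

lemma Lam1_binr (γ : Fin n₂) :
    Lam1 n₁ n₂ (Pi.single (Sum.inr γ) 1, 0) = 0 := by
  rw [Lam1_app]; simp [single_inr_comp_inl]

lemma Lam2_binr (γ : Fin n₂) :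
    Lam2 n₁ n₂ (Pi.single (Sum.inr γ) 1, 0) = (Pi.single γ 1, 0) := by
  rw [Lam2_app]; simp [single_inr_comp_inr]

lemma Lam2_binl (j : Fin n₁) :
    Lam2 n₁ n₂ (Pi.single (Sum.inl j) 1, 0) = 0 := by
  rw [Lam2_app]; simp [single_inl_comp_inr]

variable (hf₁sm : ContDiff ℝ (⊤ : ℕ∞) f₁) (hf₂sm : ContDiff ℝ (⊤ : ℕ∞) f₂)
  (h₁sm : ContDiffOn ℝ (⊤ : ℕ∞) (JJ F₁sq) (SS n₁))
  (h₂sm : ContDiffOn ℝ (⊤ : ℕ∞) (JJ F₂sq) (SS n₂))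
  (hWFsq : ∀ b w, WFsq b w =
      (f₂ (b ∘ Sum.inr)) ^ 2 * F₁sq (b ∘ Sum.inl) (w ∘ Sum.inl)
        + (f₁ (b ∘ Sum.inl)) ^ 2 * F₂sq (b ∘ Sum.inr) (w ∘ Sum.inr))

include hf₁sm hf₂sm h₁sm h₂sm hWFsq in
lemma dvJW_inl {p : (((Fin n₁ ⊕ Fin n₂) → ℝ) × ((Fin n₁ ⊕ Fin n₂) → ℝ))}
    (hp : p ∈ SW n₁ n₂) (h : Fin n₁) :
    Dv (Sum.inl h) (JJ WFsq) p
      = f₂ (prR (Fin n₁) (Fin n₂) p.1) ^ 2 * Dv h (JJ F₁sq) (Lam1 n₁ n₂ p) := by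
  have := dpJW hf₁sm hf₂sm h₁sm h₂sm hWFsq hp (0, Pi.single (Sum.inl h) 1)
  rw [Lam1_vinl, Lam2_vinl] at this
  simpa [Dv, dp_zero] using this

include hf₁sm hf₂sm h₁sm h₂sm hWFsq in
lemma dvJW_inr {p : (((Fin n₁ ⊕ Fin n₂) → ℝ) × ((Fin n₁ ⊕ Fin n₂) → ℝ))}
    (hp : p ∈ SW n₁ n₂) (γ : Fin n₂) :
    Dv (Sum.inr γ) (JJ WFsq) p
      = f₁ (prL (Fin n₁) (Fin n₂) p.1) ^ 2 * Dv γ (JJ F₂sq) (Lam2 n₁ n₂ p) := by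
  have := dpJW hf₁sm hf₂sm h₁sm h₂sm hWFsq hp (0, Pi.single (Sum.inr γ) 1)
  rw [Lam1_vinr, Lam2_vinr] at this
  simpa [Dv, dp_zero] using this

include hf₁sm hf₂sm h₁sm h₂sm hWFsq in
lemma dxJW_inl {p : (((Fin n₁ ⊕ Fin n₂) → ℝ) × ((Fin n₁ ⊕ Fin n₂) → ℝ))}
    (hp : p ∈ SW n₁ n₂) (h : Fin n₁) :
    Dx (Sum.inl h) (JJ WFsq) p
      = f₂ (prR (Fin n₁) (Fin n₂) p.1) ^ 2 * Dx h (JJ F₁sq) (Lam1 n₁ n₂ p)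
        + JJ F₂sq (Lam2 n₁ n₂ p) * fderiv ℝ (fun t => f₁ t ^ 2)
            (prL (Fin n₁) (Fin n₂) p.1) (Pi.single h 1) := by
  have := dpJW hf₁sm hf₂sm h₁sm h₂sm hWFsq hp (Pi.single (Sum.inl h) 1, 0)
  rw [Lam1_binl, Lam2_binl] at this
  simpa [Dx, dp_zero, single_inl_comp_inr, single_inl_comp_inl] using this

include hf₁sm hf₂sm h₁sm h₂sm hWFsq in
lemma dxJW_inr {p : (((Fin n₁ ⊕ Fin n₂) → ℝ) × ((Fin n₁ ⊕ Fin n₂) → ℝ))}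
    (hp : p ∈ SW n₁ n₂) (γ : Fin n₂) :
    Dx (Sum.inr γ) (JJ WFsq) p
      = f₁ (prL (Fin n₁) (Fin n₂) p.1) ^ 2 * Dx γ (JJ F₂sq) (Lam2 n₁ n₂ p)
        + JJ F₁sq (Lam1 n₁ n₂ p) * fderiv ℝ (fun t => f₂ t ^ 2)
            (prR (Fin n₁) (Fin n₂) p.1) (Pi.single γ 1) := by
  have := dpJW hf₁sm hf₂sm h₁sm h₂sm hWFsq hp (Pi.single (Sum.inr γ) 1, 0)
  rw [Lam1_binr, Lam2_binr] at this
  simp only [Dx, prL_apply, prR_apply] at this ⊢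
  simp [dp_zero, single_inr_comp_inl, single_inr_comp_inr] at this
  exact this.trans (by ring)

include hf₁sm hf₂sm h₁sm h₂sm hWFsq in
lemma dp_dvJW_inl {p : (((Fin n₁ ⊕ Fin n₂) → ℝ) × ((Fin n₁ ⊕ Fin n₂) → ℝ))}
    (hp : p ∈ SW n₁ n₂) (h : Fin n₁)
    (z : (((Fin n₁ ⊕ Fin n₂) → ℝ) × ((Fin n₁ ⊕ Fin n₂) → ℝ))) :
    DP z (Dv (Sum.inl h) (JJ WFsq)) p
      = f₂ (prR (Fin n₁) (Fin n₂) p.1) ^ 2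
          * DP (Lam1 n₁ n₂ z) (Dv h (JJ F₁sq)) (Lam1 n₁ n₂ p)
        + Dv h (JJ F₁sq) (Lam1 n₁ n₂ p) * fderiv ℝ (fun t => f₂ t ^ 2)
            (prR (Fin n₁) (Fin n₂) p.1) (prR (Fin n₁) (Fin n₂) z.1) := by
  have hφ₂ : Differentiable ℝ (fun t => f₂ t ^ 2) := (hf₂sm.pow 2).differentiable (by simp)
  have hdv : DifferentiableAt ℝ (Dv h (JJ F₁sq)) (Lam1 n₁ n₂ p) :=
    diffAt_of_contDiffOn (isOpen_SS n₁) (dp_contDiffOn (isOpen_SS n₁) h₁sm _) hp.1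
  have hcong : ∀ q ∈ SW n₁ n₂, Dv (Sum.inl h) (JJ WFsq) q
      = (fun q' => (fun t => f₂ t ^ 2) ((prR (Fin n₁) (Fin n₂)).comp
          (ContinuousLinearMap.fst ℝ _ _) q') * Dv h (JJ F₁sq) (Lam1 n₁ n₂ q')) q :=
    fun q hq => dvJW_inl hf₁sm hf₂sm h₁sm h₂sm hWFsq hq h
  rw [dp_congr_on (isOpen_SW n₁ n₂) hcong hp z, dp_warp_term _ hφ₂ _ _ _ hdv z]
  rfl

include hf₁sm hf₂sm h₁sm h₂sm hWFsq in
lemma dp_dvJW_inr {p : (((Fin n₁ ⊕ Fin n₂) → ℝ) × ((Fin n₁ ⊕ Fin n₂) → ℝ))}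
    (hp : p ∈ SW n₁ n₂) (γ : Fin n₂)
    (z : (((Fin n₁ ⊕ Fin n₂) → ℝ) × ((Fin n₁ ⊕ Fin n₂) → ℝ))) :
    DP z (Dv (Sum.inr γ) (JJ WFsq)) p
      = f₁ (prL (Fin n₁) (Fin n₂) p.1) ^ 2
          * DP (Lam2 n₁ n₂ z) (Dv γ (JJ F₂sq)) (Lam2 n₁ n₂ p)
        + Dv γ (JJ F₂sq) (Lam2 n₁ n₂ p) * fderiv ℝ (fun t => f₁ t ^ 2)
            (prL (Fin n₁) (Fin n₂) p.1) (prL (Fin n₁) (Fin n₂) z.1) := by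
  have hφ₁ : Differentiable ℝ (fun t => f₁ t ^ 2) := (hf₁sm.pow 2).differentiable (by simp)
  have hdv : DifferentiableAt ℝ (Dv γ (JJ F₂sq)) (Lam2 n₁ n₂ p) :=
    diffAt_of_contDiffOn (isOpen_SS n₂) (dp_contDiffOn (isOpen_SS n₂) h₂sm _) hp.2
  have hcong : ∀ q ∈ SW n₁ n₂, Dv (Sum.inr γ) (JJ WFsq) q
      = (fun q' => (fun t => f₁ t ^ 2) ((prL (Fin n₁) (Fin n₂)).comp
          (ContinuousLinearMap.fst ℝ _ _) q') * Dv γ (JJ F₂sq) (Lam2 n₁ n₂ q')) q :=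
    fun q hq => dvJW_inr hf₁sm hf₂sm h₁sm h₂sm hWFsq hq γ
  rw [dp_congr_on (isOpen_SW n₁ n₂) hcong hp z, dp_warp_term _ hφ₁ _ _ _ hdv z]
  rfl

end Warp2

section Warp3
variable {n₁ n₂ : ℕ}
  {F₁sq : (Fin n₁ → ℝ) → (Fin n₁ → ℝ) → ℝ}
  {F₂sq : (Fin n₂ → ℝ) → (Fin n₂ → ℝ) → ℝ}
  {f₁ : (Fin n₁ → ℝ) → ℝ} {f₂ : (Fin n₂ → ℝ) → ℝ}
  {WFsq : ((Fin n₁ ⊕ Fin n₂) → ℝ) → ((Fin n₁ ⊕ Fin n₂) → ℝ) → ℝ}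
  (hf₁sm : ContDiff ℝ (⊤ : ℕ∞) f₁) (hf₂sm : ContDiff ℝ (⊤ : ℕ∞) f₂)
  (h₁sm : ContDiffOn ℝ (⊤ : ℕ∞) (JJ F₁sq) (SS n₁))
  (h₂sm : ContDiffOn ℝ (⊤ : ℕ∞) (JJ F₂sq) (SS n₂))
  (hWFsq : ∀ b w, WFsq b w =
      (f₂ (b ∘ Sum.inr)) ^ 2 * F₁sq (b ∘ Sum.inl) (w ∘ Sum.inl)
        + (f₁ (b ∘ Sum.inl)) ^ 2 * F₂sq (b ∘ Sum.inr) (w ∘ Sum.inr))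

include hf₁sm hf₂sm h₁sm h₂sm hWFsq

lemma dv_dvJW_ll {p} (hp : p ∈ SW n₁ n₂) (i h : Fin n₁) :
    Dv (Sum.inl i) (Dv (Sum.inl h) (JJ WFsq)) p
      = f₂ (prR (Fin n₁) (Fin n₂) p.1) ^ 2
          * Dv i (Dv h (JJ F₁sq)) (Lam1 n₁ n₂ p) := by
  have := dp_dvJW_inl hf₁sm hf₂sm h₁sm h₂sm hWFsq hp h (0, Pi.single (Sum.inl i) 1)
  rw [Lam1_vinl] at this
  simpa [Dv, dp_zero] using this

lemma dv_dvJW_rl {p} (hp : p ∈ SW n₁ n₂) (β : Fin n₂) (h : Fin n₁) :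
    Dv (Sum.inr β) (Dv (Sum.inl h) (JJ WFsq)) p = 0 := by
  have := dp_dvJW_inl hf₁sm hf₂sm h₁sm h₂sm hWFsq hp h (0, Pi.single (Sum.inr β) 1)
  rw [Lam1_vinr] at this
  simpa [Dv, dp_zero] using this

lemma dv_dvJW_lr {p} (hp : p ∈ SW n₁ n₂) (i : Fin n₁) (β : Fin n₂) :
    Dv (Sum.inl i) (Dv (Sum.inr β) (JJ WFsq)) p = 0 := by
  have := dp_dvJW_inr hf₁sm hf₂sm h₁sm h₂sm hWFsq hp β (0, Pi.single (Sum.inl i) 1)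
  rw [Lam2_vinl] at this
  simpa [Dv, dp_zero] using this

lemma dv_dvJW_rr {p} (hp : p ∈ SW n₁ n₂) (α β : Fin n₂) :
    Dv (Sum.inr α) (Dv (Sum.inr β) (JJ WFsq)) p
      = f₁ (prL (Fin n₁) (Fin n₂) p.1) ^ 2
          * Dv α (Dv β (JJ F₂sq)) (Lam2 n₁ n₂ p) := by
  have := dp_dvJW_inr hf₁sm hf₂sm h₁sm h₂sm hWFsq hp β (0, Pi.single (Sum.inr α) 1)
  rw [Lam2_vinr] at this
  simpa [Dv, dp_zero] using this

lemma dx_dvJW_ll {p} (hp : p ∈ SW n₁ n₂) (j h : Fin n₁) :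
    Dx (Sum.inl j) (Dv (Sum.inl h) (JJ WFsq)) p
      = f₂ (prR (Fin n₁) (Fin n₂) p.1) ^ 2 * Dx j (Dv h (JJ F₁sq)) (Lam1 n₁ n₂ p) := by
  have := dp_dvJW_inl hf₁sm hf₂sm h₁sm h₂sm hWFsq hp h (Pi.single (Sum.inl j) 1, 0)
  rw [Lam1_binl] at this
  simpa [Dx, dp_zero, single_inl_comp_inr] using this

lemma dx_dvJW_rl {p} (hp : p ∈ SW n₁ n₂) (γ : Fin n₂) (h : Fin n₁) :
    Dx (Sum.inr γ) (Dv (Sum.inl h) (JJ WFsq)) p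
      = Dv h (JJ F₁sq) (Lam1 n₁ n₂ p)
          * fderiv ℝ (fun t => f₂ t ^ 2) (prR (Fin n₁) (Fin n₂) p.1) (Pi.single γ 1) := by
  have := dp_dvJW_inl hf₁sm hf₂sm h₁sm h₂sm hWFsq hp h (Pi.single (Sum.inr γ) 1, 0)
  rw [Lam1_binr] at this
  simpa [Dx, dp_zero, single_inr_comp_inr] using this

lemma dx_dvJW_lr {p} (hp : p ∈ SW n₁ n₂) (j : Fin n₁) (β : Fin n₂) :
    Dx (Sum.inl j) (Dv (Sum.inr β) (JJ WFsq)) p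
      = Dv β (JJ F₂sq) (Lam2 n₁ n₂ p)
          * fderiv ℝ (fun t => f₁ t ^ 2) (prL (Fin n₁) (Fin n₂) p.1) (Pi.single j 1) := by
  have := dp_dvJW_inr hf₁sm hf₂sm h₁sm h₂sm hWFsq hp β (Pi.single (Sum.inl j) 1, 0)
  rw [Lam2_binl] at this
  simpa [Dx, dp_zero, single_inl_comp_inl] using this

lemma dx_dvJW_rr {p} (hp : p ∈ SW n₁ n₂) (γ β : Fin n₂) :
    Dx (Sum.inr γ) (Dv (Sum.inr β) (JJ WFsq)) p
      = f₁ (prL (Fin n₁) (Fin n₂) p.1) ^ 2 * Dx γ (Dv β (JJ F₂sq)) (Lam2 n₁ n₂ p) := by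
  have := dp_dvJW_inr hf₁sm hf₂sm h₁sm h₂sm hWFsq hp β (Pi.single (Sum.inr γ) 1, 0)
  rw [Lam2_binr] at this
  simpa [Dx, dp_zero, single_inr_comp_inl] using this

lemma MW_block {p} (hp : p ∈ SW n₁ n₂) :
    MM WFsq p = Matrix.fromBlocks
      (f₂ (prR (Fin n₁) (Fin n₂) p.1) ^ 2 • MM F₁sq (Lam1 n₁ n₂ p)) 0 0
      (f₁ (prL (Fin n₁) (Fin n₂) p.1) ^ 2 • MM F₂sq (Lam2 n₁ n₂ p)) := by
  ext a b
  cases a with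
  | inl i =>
    cases b with
    | inl h =>
      show (1/2 : ℝ) * Dv (Sum.inl i) (Dv (Sum.inl h) (JJ WFsq)) p = _
      rw [dv_dvJW_ll hf₁sm hf₂sm h₁sm h₂sm hWFsq hp i h]
      simp [Matrix.fromBlocks_apply₁₁, MM]
      ring
    | inr β =>
      show (1/2 : ℝ) * Dv (Sum.inl i) (Dv (Sum.inr β) (JJ WFsq)) p = _
      rw [dv_dvJW_lr hf₁sm hf₂sm h₁sm h₂sm hWFsq hp i β]
      simp [Matrix.fromBlocks_apply₁₂]
  | inr α =>
    cases b with
    | inl h =>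
      show (1/2 : ℝ) * Dv (Sum.inr α) (Dv (Sum.inl h) (JJ WFsq)) p = _
      rw [dv_dvJW_rl hf₁sm hf₂sm h₁sm h₂sm hWFsq hp α h]
      simp [Matrix.fromBlocks_apply₂₁]
    | inr β =>
      show (1/2 : ℝ) * Dv (Sum.inr α) (Dv (Sum.inr β) (JJ WFsq)) p = _
      rw [dv_dvJW_rr hf₁sm hf₂sm h₁sm h₂sm hWFsq hp α β]
      simp [Matrix.fromBlocks_apply₂₂, MM]
      ring

lemma MW_inv {p} (hp : p ∈ SW n₁ n₂)
    (h1 : (MM F₁sq (Lam1 n₁ n₂ p)).det ≠ 0) (h2 : (MM F₂sq (Lam2 n₁ n₂ p)).det ≠ 0)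
    (hf1 : f₁ (prL (Fin n₁) (Fin n₂) p.1) ≠ 0) (hf2 : f₂ (prR (Fin n₁) (Fin n₂) p.1) ≠ 0) :
    (MM WFsq p)⁻¹ = Matrix.fromBlocks
      ((f₂ (prR (Fin n₁) (Fin n₂) p.1) ^ 2)⁻¹ • (MM F₁sq (Lam1 n₁ n₂ p))⁻¹) 0 0
      ((f₁ (prL (Fin n₁) (Fin n₂) p.1) ^ 2)⁻¹ • (MM F₂sq (Lam2 n₁ n₂ p))⁻¹) := by
  have hc2 : (f₂ (prR (Fin n₁) (Fin n₂) p.1) ^ 2) ≠ 0 := pow_ne_zero 2 hf2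
  have hc1 : (f₁ (prL (Fin n₁) (Fin n₂) p.1) ^ 2) ≠ 0 := pow_ne_zero 2 hf1
  have hd1 : ((f₂ (prR (Fin n₁) (Fin n₂) p.1) ^ 2) • MM F₁sq (Lam1 n₁ n₂ p)).det ≠ 0 := by
    rw [Matrix.det_smul]
    exact mul_ne_zero (pow_ne_zero _ hc2) h1
  have hd2 : ((f₁ (prL (Fin n₁) (Fin n₂) p.1) ^ 2) • MM F₂sq (Lam2 n₁ n₂ p)).det ≠ 0 := by
    rw [Matrix.det_smul]
    exact mul_ne_zero (pow_ne_zero _ hc1) h2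
  rw [MW_block hf₁sm hf₂sm h₁sm h₂sm hWFsq hp, fromBlocks_inv_eq hd1 hd2,
    smul_inv_eq hc2 h1, smul_inv_eq hc1 h2]

end Warp3

/-! ### Closed form of the warped spray -/

lemma det_MM_ne {σ : Type*} [Fintype σ] [DecidableEq σ] {F : (σ → ℝ) → (σ → ℝ) → ℝ}
    {S : Set ((σ → ℝ) × (σ → ℝ))} (hS : IsOpen S) (hsm : ContDiffOn ℝ (⊤ : ℕ∞) (JJ F) S)
    {x y : σ → ℝ} (hp : (x, y) ∈ S)
    (hpd : ∀ z : σ → ℝ, z ≠ 0 → 0 < ∑ i, ∑ j, fundG (F x) i j y * z i * z j) :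
    (MM F (x, y)).det ≠ 0 := by
  apply det_ne_zero_of_pos
  intro z hz
  have : ∑ i, ∑ j, MM F (x, y) i j * z i * z j
      = ∑ i, ∑ j, fundG (F x) i j y * z i * z j := by
    apply Finset.sum_congr rfl; intro i _
    apply Finset.sum_congr rfl; intro j _
    rw [L_fundG hS hsm hp i j]
  rw [this]
  exact hpd z hz

noncomputable def LinE {n : ℕ} (E : Fin n → ℝ) : ((Fin n → ℝ) →L[ℝ] ℝ) :=
  ∑ γ, E γ • ContinuousLinearMap.proj γ

lemma LinE_apply {n : ℕ} (E : Fin n → ℝ) (v : Fin n → ℝ) :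
    LinE E v = ∑ γ, E γ * v γ := by
  simp [LinE, ContinuousLinearMap.sum_apply]

lemma LinE_single {n : ℕ} (E : Fin n → ℝ) (γ : Fin n) :
    LinE E (Pi.single γ 1) = E γ := by
  rw [LinE_apply]
  simp [Pi.single_apply]

/-- The coefficient functions of the closed form of the spray (mixed row). -/
noncomputable def AAf {n : ℕ} (F : (Fin n → ℝ) → (Fin n → ℝ) → ℝ)
    (c2 : ℝ) (x : Fin n → ℝ) (k : Fin n) : (Fin n → ℝ) → ℝ :=
  fun y => (1/4 : ℝ) * ∑ h, (c2⁻¹ * (MM F (x, y))⁻¹ k h)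
    * ((∑ j, (c2 * Dx j (Dv h (JJ F)) (x, y)) * y j) - c2 * Dx h (JJ F) (x, y))

noncomputable def BBf {n : ℕ} (F : (Fin n → ℝ) → (Fin n → ℝ) → ℝ)
    (c2 : ℝ) (x : Fin n → ℝ) (k : Fin n) : (Fin n → ℝ) → ℝ :=
  fun y => (1/4 : ℝ) * ∑ h, (c2⁻¹ * (MM F (x, y))⁻¹ k h) * Dv h (JJ F) (x, y)

noncomputable def CCf {n : ℕ} (F : (Fin n → ℝ) → (Fin n → ℝ) → ℝ)
    (c2 : ℝ) (x : Fin n → ℝ) (k : Fin n) (D : Fin n → ℝ) : (Fin n → ℝ) → ℝ :=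
  fun y => (1/4 : ℝ) * ∑ h, -((c2⁻¹ * (MM F (x, y))⁻¹ k h) * D h)

section Closed
variable {n₁ n₂ : ℕ}
  {F₁sq : (Fin n₁ → ℝ) → (Fin n₁ → ℝ) → ℝ}
  {F₂sq : (Fin n₂ → ℝ) → (Fin n₂ → ℝ) → ℝ}
  {f₁ : (Fin n₁ → ℝ) → ℝ} {f₂ : (Fin n₂ → ℝ) → ℝ}
  {WFsq : ((Fin n₁ ⊕ Fin n₂) → ℝ) → ((Fin n₁ ⊕ Fin n₂) → ℝ) → ℝ}
  (hf₁sm : ContDiff ℝ (⊤ : ℕ∞) f₁) (hf₂sm : ContDiff ℝ (⊤ : ℕ∞) f₂)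
  (h₁sm : ContDiffOn ℝ (⊤ : ℕ∞) (JJ F₁sq) (SS n₁))
  (h₂sm : ContDiffOn ℝ (⊤ : ℕ∞) (JJ F₂sq) (SS n₂))
  (hWFsq : ∀ b w, WFsq b w =
      (f₂ (b ∘ Sum.inr)) ^ 2 * F₁sq (b ∘ Sum.inl) (w ∘ Sum.inl)
        + (f₁ (b ∘ Sum.inl)) ^ 2 * F₂sq (b ∘ Sum.inr) (w ∘ Sum.inr))
  (hpd₁ : ∀ x (y : Fin n₁ → ℝ), y ≠ 0 → ∀ z : Fin n₁ → ℝ, z ≠ 0 →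
      0 < ∑ i, ∑ j, fundG (F₁sq x) i j y * z i * z j)
  (hpd₂ : ∀ u (v : Fin n₂ → ℝ), v ≠ 0 → ∀ z : Fin n₂ → ℝ, z ≠ 0 →
      0 < ∑ α, ∑ β, fundG (F₂sq u) α β v * z α * z β)
  (hf₁ : ∀ x, 0 < f₁ x) (hf₂ : ∀ u, 0 < f₂ u)

include hf₁sm hf₂sm h₁sm h₂sm hWFsq hpd₁ hpd₂ hf₁ hf₂ in
lemma spray_closed2 (b w' : (Fin n₁ ⊕ Fin n₂) → ℝ) (h1 : w' ∘ Sum.inl ≠ 0)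
    (h2 : w' ∘ Sum.inr ≠ 0) (k : Fin n₁) :
    spray WFsq (Sum.inl k) b w'
      = AAf F₁sq (f₂ (b ∘ Sum.inr) ^ 2) (b ∘ Sum.inl) k (w' ∘ Sum.inl)
        + BBf F₁sq (f₂ (b ∘ Sum.inr) ^ 2) (b ∘ Sum.inl) k (w' ∘ Sum.inl)
            * LinE (fun γ => fderiv ℝ (fun t => f₂ t ^ 2) (b ∘ Sum.inr) (Pi.single γ 1))
                (w' ∘ Sum.inr)
        + CCf F₁sq (f₂ (b ∘ Sum.inr) ^ 2) (b ∘ Sum.inl) k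
            (fun h => fderiv ℝ (fun t => f₁ t ^ 2) (b ∘ Sum.inl) (Pi.single h 1))
            (w' ∘ Sum.inl)
            * F₂sq (b ∘ Sum.inr) (w' ∘ Sum.inr) := by
  have hw : (b, w') ∈ SW n₁ n₂ := ⟨h1, h2⟩
  have hJW := JW_smooth hf₁sm hf₂sm h₁sm h₂sm hWFsq
  have hfull : ∀ b', (b', w') ∈ SW n₁ n₂ := fun b' => ⟨h1, h2⟩
  have hdet1 : (MM F₁sq (Lam1 n₁ n₂ (b, w'))).det ≠ 0 :=
    det_MM_ne (isOpen_SS n₁) h₁sm h1 (hpd₁ (b ∘ Sum.inl) (w' ∘ Sum.inl) h1)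
  have hdet2 : (MM F₂sq (Lam2 n₁ n₂ (b, w'))).det ≠ 0 :=
    det_MM_ne (isOpen_SS n₂) h₂sm h2 (hpd₂ (b ∘ Sum.inr) (w' ∘ Sum.inr) h2)
  have hf1ne : f₁ (b ∘ Sum.inl) ≠ 0 := ne_of_gt (hf₁ _)
  have hf2ne : f₂ (b ∘ Sum.inr) ≠ 0 := ne_of_gt (hf₂ _)
  have hc2 : (f₂ (b ∘ Sum.inr) ^ 2) ≠ 0 := pow_ne_zero _ hf2ne
  have hinv := MW_inv hf₁sm hf₂sm h₁sm h₂sm hWFsq hw hdet1 hdet2 hf1ne hf2ne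
  rw [L_spray (isOpen_SW n₁ n₂) hJW hfull (Sum.inl k)]
  rw [Fintype.sum_sum_type]
  have hz : ∀ γ : Fin n₂, (MM WFsq (b, w'))⁻¹ (Sum.inl k) (Sum.inr γ) = 0 := by
    intro γ; rw [hinv]; simp
  have hsum0 : (∑ γ : Fin n₂, (MM WFsq (b, w'))⁻¹ (Sum.inl k) (Sum.inr γ) *
      ((∑ e, Dx e (Dv (Sum.inr γ) (JJ WFsq)) (b, w') * w' e)
        - Dx (Sum.inr γ) (JJ WFsq) (b, w'))) = 0 := by
    apply Finset.sum_eq_zero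
    intro γ _
    rw [hz γ, zero_mul]
  rw [hsum0, add_zero]
  have hmain : ∀ h : Fin n₁,
      (MM WFsq (b, w'))⁻¹ (Sum.inl k) (Sum.inl h) *
        ((∑ e, Dx e (Dv (Sum.inl h) (JJ WFsq)) (b, w') * w' e)
          - Dx (Sum.inl h) (JJ WFsq) (b, w'))
      = ((f₂ (b ∘ Sum.inr) ^ 2)⁻¹ * (MM F₁sq (b ∘ Sum.inl, w' ∘ Sum.inl))⁻¹ k h)
          * ((∑ j, (f₂ (b ∘ Sum.inr) ^ 2
                * Dx j (Dv h (JJ F₁sq)) (b ∘ Sum.inl, w' ∘ Sum.inl)) * w' (Sum.inl j))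
            - f₂ (b ∘ Sum.inr) ^ 2 * Dx h (JJ F₁sq) (b ∘ Sum.inl, w' ∘ Sum.inl))
        + ((f₂ (b ∘ Sum.inr) ^ 2)⁻¹ * (MM F₁sq (b ∘ Sum.inl, w' ∘ Sum.inl))⁻¹ k h)
            * Dv h (JJ F₁sq) (b ∘ Sum.inl, w' ∘ Sum.inl)
            * (∑ γ, fderiv ℝ (fun t => f₂ t ^ 2) (b ∘ Sum.inr) (Pi.single γ 1)
                * w' (Sum.inr γ))
        + (-(((f₂ (b ∘ Sum.inr) ^ 2)⁻¹ * (MM F₁sq (b ∘ Sum.inl, w' ∘ Sum.inl))⁻¹ k h)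
            * fderiv ℝ (fun t => f₁ t ^ 2) (b ∘ Sum.inl) (Pi.single h 1)))
            * F₂sq (b ∘ Sum.inr) (w' ∘ Sum.inr) := by
    intro h
    have hentry : (MM WFsq (b, w'))⁻¹ (Sum.inl k) (Sum.inl h)
        = (f₂ (b ∘ Sum.inr) ^ 2)⁻¹ * (MM F₁sq (b ∘ Sum.inl, w' ∘ Sum.inl))⁻¹ k h := by
      rw [hinv, Matrix.fromBlocks_apply₁₁, Matrix.smul_apply, smul_eq_mul]
      rfl
    have hsum_e : (∑ e, Dx e (Dv (Sum.inl h) (JJ WFsq)) (b, w') * w' e)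
        = (∑ j, (f₂ (b ∘ Sum.inr) ^ 2
              * Dx j (Dv h (JJ F₁sq)) (b ∘ Sum.inl, w' ∘ Sum.inl)) * w' (Sum.inl j))
          + Dv h (JJ F₁sq) (b ∘ Sum.inl, w' ∘ Sum.inl)
            * (∑ γ, fderiv ℝ (fun t => f₂ t ^ 2) (b ∘ Sum.inr) (Pi.single γ 1)
                * w' (Sum.inr γ)) := by
      rw [Fintype.sum_sum_type]
      congr 1
      · apply Finset.sum_congr rfl
        intro j _
        rw [dx_dvJW_ll hf₁sm hf₂sm h₁sm h₂sm hWFsq hw j h]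
        rfl
      · rw [Finset.mul_sum]
        apply Finset.sum_congr rfl
        intro γ _
        rw [dx_dvJW_rl hf₁sm hf₂sm h₁sm h₂sm hWFsq hw γ h]
        show Dv h (JJ F₁sq) (b ∘ Sum.inl, w' ∘ Sum.inl)
            * fderiv ℝ (fun t => f₂ t ^ 2) (b ∘ Sum.inr) (Pi.single γ 1) * w' (Sum.inr γ) = _
        ring
    have hdx : Dx (Sum.inl h) (JJ WFsq) (b, w')
        = f₂ (b ∘ Sum.inr) ^ 2 * Dx h (JJ F₁sq) (b ∘ Sum.inl, w' ∘ Sum.inl)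
          + F₂sq (b ∘ Sum.inr) (w' ∘ Sum.inr)
            * fderiv ℝ (fun t => f₁ t ^ 2) (b ∘ Sum.inl) (Pi.single h 1) := by
      rw [dxJW_inl hf₁sm hf₂sm h₁sm h₂sm hWFsq hw h]
      rfl
    rw [hentry, hsum_e, hdx]
    ring
  rw [Finset.sum_congr rfl (fun h _ => hmain h), Finset.sum_add_distrib,
    Finset.sum_add_distrib, ← Finset.sum_mul, ← Finset.sum_mul]
  show (1/4 : ℝ) * _ = _
  rw [AAf, BBf, CCf]
  have hL : LinE (fun γ => fderiv ℝ (fun t => f₂ t ^ 2) (b ∘ Sum.inr) (Pi.single γ 1))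
      (w' ∘ Sum.inr) = ∑ γ, fderiv ℝ (fun t => f₂ t ^ 2) (b ∘ Sum.inr) (Pi.single γ 1)
        * w' (Sum.inr γ) := by
    rw [LinE_apply]
    rfl
  rw [hL]
  have hyj : ∀ j : Fin n₁, (w' ∘ Sum.inl) j = w' (Sum.inl j) := fun _ => rfl
  simp only [hyj]
  ring
end Closed

/-! ### Triple fiber-derivative of the closed form -/

section Triple
variable {m₁ m₂ : ℕ} {E : Type*} [NormedAddCommGroup E] [NormedSpace ℝ E]
  (P1 : E →L[ℝ] (Fin m₁ → ℝ)) (P2 : E →L[ℝ] (Fin m₂ → ℝ)) (u : Fin m₂ → ℝ)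

lemma isOpen_UU : IsOpen {q : E | P1 q ≠ 0 ∧ P2 q ≠ 0} :=
  (isOpen_ne.preimage P1.continuous).inter (isOpen_ne.preimage P2.continuous)

lemma t_stepA {A : (Fin m₁ → ℝ) → ℝ} (hA : ContDiffOn ℝ (⊤ : ℕ∞) A {t | t ≠ 0})
    {q : E} (hq : P1 q ≠ 0) {z : E} (hz : P1 z = 0) :
    DP z (fun q' => A (P1 q')) q = 0 := by
  have hdA : DifferentiableAt ℝ A (P1 q) :=
    diffAt_of_contDiffOn isOpen_ne hA hq
  rw [dp_comp_clm' P1 A hdA z, hz, dp_zero]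

lemma t_diffA {A : (Fin m₁ → ℝ) → ℝ} (hA : ContDiffOn ℝ (⊤ : ℕ∞) A {t | t ≠ 0})
    {q : E} (hq : P1 q ≠ 0) : DifferentiableAt ℝ (fun q' => A (P1 q')) q :=
  (diffAt_of_contDiffOn isOpen_ne hA hq).comp q P1.differentiableAt

lemma t_diffG {g : ((Fin m₂ → ℝ) × (Fin m₂ → ℝ)) → ℝ}
    (hg : ContDiffOn ℝ (⊤ : ℕ∞) g (SS m₂)) {q : E} (hq : P2 q ≠ 0) :
    DifferentiableAt ℝ (fun q' => g (u, P2 q')) q := by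
  have hdg : DifferentiableAt ℝ g (u, P2 q) :=
    diffAt_of_contDiffOn (isOpen_SS m₂) hg hq
  exact (hdg.comp q ((DifferentiableAt.prodMk (differentiableAt_const u) P2.differentiableAt)))

lemma t_stepC {C : (Fin m₁ → ℝ) → ℝ} (hC : ContDiffOn ℝ (⊤ : ℕ∞) C {t | t ≠ 0})
    {g : ((Fin m₂ → ℝ) × (Fin m₂ → ℝ)) → ℝ} (hg : ContDiffOn ℝ (⊤ : ℕ∞) g (SS m₂))
    {q : E} (hq1 : P1 q ≠ 0) (hq2 : P2 q ≠ 0) {z : E} (hz1 : P1 z = 0)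
    {d : Fin m₂} (hz2 : P2 z = Pi.single d 1) :
    DP z (fun q' => C (P1 q') * g (u, P2 q')) q
      = C (P1 q) * DP (0, Pi.single d 1) g (u, P2 q) := by
  have hdC : DifferentiableAt ℝ (fun q' => C (P1 q')) q := t_diffA P1 hC hq1
  have hdG : DifferentiableAt ℝ (fun q' => g (u, P2 q')) q := t_diffG P2 u hg hq2
  rw [dp_mul _ _ hdC hdG z, t_stepA P1 hC hq1 hz1]
  have hdg : DifferentiableAt ℝ g (u, P2 q) :=
    diffAt_of_contDiffOn (isOpen_SS m₂) hg hq2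
  have hslice : DifferentiableAt ℝ (fun v => g (u, v)) (P2 q) :=
    hdg.comp (P2 q) (DifferentiableAt.prodMk (differentiableAt_const u) differentiableAt_id)
  have hgz : DP z (fun q' => g (u, P2 q')) q = DP (0, Pi.single d 1) g (u, P2 q) := by
    rw [dp_comp_clm' P2 (fun v => g (u, v)) hslice z, hz2]
    show fderiv ℝ (fun v => g (u, v)) (P2 q) (Pi.single d 1) = _
    rw [fderiv_slice_right g hdg (Pi.single d 1)]
    rfl
  rw [hgz]
  ring

lemma t_stepB {B : (Fin m₁ → ℝ) → ℝ} (hB : ContDiffOn ℝ (⊤ : ℕ∞) B {t | t ≠ 0}) (r : ℝ)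
    {q : E} (hq : P1 q ≠ 0) {z : E} (hz : P1 z = 0) :
    DP z (fun q' => B (P1 q') * r) q = 0 := by
  have hdB : DifferentiableAt ℝ (fun q' => B (P1 q')) q := t_diffA P1 hB hq
  have := dp_mul (fun q' => B (P1 q')) (fun _ => r) hdB (differentiableAt_const r) z
  rw [this, dp_const, t_stepA P1 hB hq hz]
  ring

lemma dp_clm2 {F' : Type*} [NormedAddCommGroup F'] [NormedSpace ℝ F']
    (L1 : F' →L[ℝ] ℝ) (L2 : E →L[ℝ] F') (z p : E) :
    DP z (fun q => L1 (L2 q)) p = L1 (L2 z) := by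
  have : (fun q => L1 (L2 q)) = ⇑(L1.comp L2) := rfl
  unfold DP
  rw [this, ContinuousLinearMap.fderiv]
  rfl

end Triple

section Triple2
variable {m₁ m₂ : ℕ} {E : Type*} [NormedAddCommGroup E] [NormedSpace ℝ E]
  (P1 : E →L[ℝ] (Fin m₁ → ℝ)) (P2 : E →L[ℝ] (Fin m₂ → ℝ)) (u : Fin m₂ → ℝ)

lemma tripleMain {σfun : E → ℝ} {A B C : (Fin m₁ → ℝ) → ℝ}
    (hA : ContDiffOn ℝ (⊤ : ℕ∞) A {t | t ≠ 0}) (hB : ContDiffOn ℝ (⊤ : ℕ∞) B {t | t ≠ 0})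
    (hC : ContDiffOn ℝ (⊤ : ℕ∞) C {t | t ≠ 0}) (Lin : (Fin m₂ → ℝ) →L[ℝ] ℝ)
    {G : (Fin m₂ → ℝ) → (Fin m₂ → ℝ) → ℝ} (hG : ContDiffOn ℝ (⊤ : ℕ∞) (JJ G) (SS m₂))
    (hρ : ∀ q ∈ {q : E | P1 q ≠ 0 ∧ P2 q ≠ 0}, σfun q
      = A (P1 q) + B (P1 q) * Lin (P2 q) + C (P1 q) * JJ G (u, P2 q))
    {w : E} (hw1 : P1 w ≠ 0) (hw2 : P2 w ≠ 0)
    {c d e : Fin m₂} {zc zd ze : E}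
    (hc1 : P1 zc = 0) (hc2 : P2 zc = Pi.single c 1)
    (hd1 : P1 zd = 0) (hd2 : P2 zd = Pi.single d 1)
    (he1 : P1 ze = 0) (he2 : P2 ze = Pi.single e 1) :
    fderiv ℝ (fun w₁ => fderiv ℝ (fun w₂ => fderiv ℝ σfun w₂ ze) w₁ zd) w zc
      = C (P1 w) * DP (0, Pi.single c 1) (DP (0, Pi.single d 1)
          (DP (0, Pi.single e 1) (JJ G))) (u, P2 w) := by
  have hU : IsOpen {q : E | P1 q ≠ 0 ∧ P2 q ≠ 0} := isOpen_UU P1 P2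
  -- step 1
  have h1 : ∀ q ∈ {q : E | P1 q ≠ 0 ∧ P2 q ≠ 0}, fderiv ℝ σfun q ze
      = B (P1 q) * Lin (Pi.single e 1)
        + C (P1 q) * DP (0, Pi.single e 1) (JJ G) (u, P2 q) := by
    intro q hq
    have hcong : σfun =ᶠ[nhds q] (fun q' => A (P1 q') + B (P1 q') * Lin (P2 q')
        + C (P1 q') * JJ G (u, P2 q')) :=
      Filter.eventuallyEq_of_mem (hU.mem_nhds hq) hρ
    rw [hcong.fderiv_eq]
    have hdA := t_diffA P1 hA hq.1
    have hdL : DifferentiableAt ℝ (fun q' => Lin (P2 q')) q :=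
      (Lin.comp P2).differentiableAt
    have hdB := t_diffA P1 hB hq.1
    have hdBL : DifferentiableAt ℝ (fun q' => B (P1 q') * Lin (P2 q')) q := hdB.mul hdL
    have hdCG : DifferentiableAt ℝ (fun q' => C (P1 q') * JJ G (u, P2 q')) q :=
      (t_diffA P1 hC hq.1).mul (t_diffG P2 u hG hq.2)
    show DP ze (fun q' => A (P1 q') + B (P1 q') * Lin (P2 q')
        + C (P1 q') * JJ G (u, P2 q')) q = _
    rw [dp_add (fun q' => A (P1 q') + B (P1 q') * Lin (P2 q')) _ (hdA.add hdBL) hdCG ze, dp_add _ _ hdA hdBL ze,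
      dp_mul _ _ hdB hdL ze, t_stepA P1 hA hq.1 he1, dp_clm2 Lin P2 ze q, he2,
      t_stepA P1 hB hq.1 he1, t_stepC P1 P2 u hC hG hq.1 hq.2 he1 he2]
    ring
  -- step 2
  have h2 : ∀ q ∈ {q : E | P1 q ≠ 0 ∧ P2 q ≠ 0},
      fderiv ℝ (fun w₂ => fderiv ℝ σfun w₂ ze) q zd
        = C (P1 q) * DP (0, Pi.single d 1)
            (DP (0, Pi.single e 1) (JJ G)) (u, P2 q) := by
    intro q hq
    have hcong : (fun w₂ => fderiv ℝ σfun w₂ ze) =ᶠ[nhds q]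
        (fun q' => B (P1 q') * Lin (Pi.single e 1)
          + C (P1 q') * DP (0, Pi.single e 1) (JJ G) (u, P2 q')) :=
      Filter.eventuallyEq_of_mem (hU.mem_nhds hq) h1
    rw [hcong.fderiv_eq]
    have hg1 : ContDiffOn ℝ (⊤ : ℕ∞) (DP (0, Pi.single e 1) (JJ G)) (SS m₂) :=
      dp_contDiffOn (isOpen_SS m₂) hG _
    have hdBr : DifferentiableAt ℝ (fun q' => B (P1 q') * Lin (Pi.single e 1)) q :=
      (t_diffA P1 hB hq.1).mul_const _
    have hdCG : DifferentiableAt ℝ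
        (fun q' => C (P1 q') * DP (0, Pi.single e 1) (JJ G) (u, P2 q')) q :=
      (t_diffA P1 hC hq.1).mul (t_diffG P2 u hg1 hq.2)
    show DP zd (fun q' => B (P1 q') * Lin (Pi.single e 1)
        + C (P1 q') * DP (0, Pi.single e 1) (JJ G) (u, P2 q')) q = _
    rw [dp_add _ _ hdBr hdCG zd, t_stepB P1 hB _ hq.1 hd1,
      t_stepC P1 P2 u hC hg1 hq.1 hq.2 hd1 hd2]
    ring
  -- step 3
  have hcong : (fun w₁ => fderiv ℝ (fun w₂ => fderiv ℝ σfun w₂ ze) w₁ zd) =ᶠ[nhds w]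
      (fun q' => C (P1 q') * DP (0, Pi.single d 1)
        (DP (0, Pi.single e 1) (JJ G)) (u, P2 q')) :=
    Filter.eventuallyEq_of_mem (hU.mem_nhds ⟨hw1, hw2⟩) h2
  rw [hcong.fderiv_eq]
  exact t_stepC P1 P2 u hC
    (dp_contDiffOn (isOpen_SS m₂) (dp_contDiffOn (isOpen_SS m₂) hG _) _)
    hw1 hw2 hc1 hc2

end Triple2

/-! ### Smoothness of the closed-form coefficients -/

section Smooth
variable {n : ℕ} {F : (Fin n → ℝ) → (Fin n → ℝ) → ℝ}
  (hsm : ContDiffOn ℝ (⊤ : ℕ∞) (JJ F) (SS n)) (x : Fin n → ℝ)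

include hsm in
lemma slice_smooth {g : ((Fin n → ℝ) × (Fin n → ℝ)) → ℝ}
    (hg : ContDiffOn ℝ (⊤ : ℕ∞) g (SS n)) :
    ContDiffOn ℝ (⊤ : ℕ∞) (fun y => g (x, y)) {t : Fin n → ℝ | t ≠ 0} := by
  exact contDiffOn_slice_right' hg x

include hsm in
lemma smooth_MM_entry (i j : Fin n) :
    ContDiffOn ℝ (⊤ : ℕ∞) (fun y => MM F (x, y) i j) {t : Fin n → ℝ | t ≠ 0} := by
  have h2 : ContDiffOn ℝ (⊤ : ℕ∞) (Dv i (Dv j (JJ F))) (SS n) :=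
    dp_contDiffOn (isOpen_SS n) (dp_contDiffOn (isOpen_SS n) hsm _) _
  show ContDiffOn ℝ (⊤ : ℕ∞) (fun y => (1/2 : ℝ) * Dv i (Dv j (JJ F)) (x, y)) _
  exact contDiffOn_const.mul (slice_smooth hsm x h2)

variable (hpdx : ∀ (y : Fin n → ℝ), y ≠ 0 → ∀ z : Fin n → ℝ, z ≠ 0 →
    0 < ∑ i, ∑ j, fundG (F x) i j y * z i * z j)

include hsm hpdx in
lemma smooth_Minv (k h : Fin n) :
    ContDiffOn ℝ (⊤ : ℕ∞) (fun y => (MM F (x, y))⁻¹ k h) {t : Fin n → ℝ | t ≠ 0} := by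
  apply contDiffOn_inv_entry (A := fun y => MM F (x, y))
  · exact fun i j => smooth_MM_entry hsm x i j
  · intro y hy
    exact det_MM_ne (isOpen_SS n) hsm hy (hpdx y hy)

include hsm hpdx in
lemma smooth_CCf (c2 : ℝ) (k : Fin n) (D : Fin n → ℝ) :
    ContDiffOn ℝ (⊤ : ℕ∞) (CCf F c2 x k D) {t : Fin n → ℝ | t ≠ 0} := by
  apply contDiffOn_const.mul
  apply ContDiffOn.sum
  intro h _
  exact ((contDiffOn_const.mul (smooth_Minv hsm x hpdx k h)).mul contDiffOn_const).neg

include hsm hpdx in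
lemma smooth_BBf (c2 : ℝ) (k : Fin n) :
    ContDiffOn ℝ (⊤ : ℕ∞) (BBf F c2 x k) {t : Fin n → ℝ | t ≠ 0} := by
  apply contDiffOn_const.mul
  apply ContDiffOn.sum
  intro h _
  exact (contDiffOn_const.mul (smooth_Minv hsm x hpdx k h)).mul
    (slice_smooth hsm x (dp_contDiffOn (isOpen_SS n) hsm _))

include hsm hpdx in
lemma smooth_AAf (c2 : ℝ) (k : Fin n) :
    ContDiffOn ℝ (⊤ : ℕ∞) (AAf F c2 x k) {t : Fin n → ℝ | t ≠ 0} := by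
  apply contDiffOn_const.mul
  apply ContDiffOn.sum
  intro h _
  apply (contDiffOn_const.mul (smooth_Minv hsm x hpdx k h)).mul
  apply ContDiffOn.sub
  · apply ContDiffOn.sum
    intro j _
    exact (contDiffOn_const.mul (slice_smooth hsm x
        (dp_contDiffOn (isOpen_SS n) (dp_contDiffOn (isOpen_SS n) hsm _) _))).mul
      ((ContinuousLinearMap.proj j : ((Fin n → ℝ)) →L[ℝ] ℝ).contDiff.contDiffOn)
  · exact contDiffOn_const.mul (slice_smooth hsm x
      (dp_contDiffOn (isOpen_SS n) hsm _))

end Smooth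

section Closed1
variable {n₁ n₂ : ℕ}
  {F₁sq : (Fin n₁ → ℝ) → (Fin n₁ → ℝ) → ℝ}
  {F₂sq : (Fin n₂ → ℝ) → (Fin n₂ → ℝ) → ℝ}
  {f₁ : (Fin n₁ → ℝ) → ℝ} {f₂ : (Fin n₂ → ℝ) → ℝ}
  {WFsq : ((Fin n₁ ⊕ Fin n₂) → ℝ) → ((Fin n₁ ⊕ Fin n₂) → ℝ) → ℝ}
  (hf₁sm : ContDiff ℝ (⊤ : ℕ∞) f₁) (hf₂sm : ContDiff ℝ (⊤ : ℕ∞) f₂)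
  (h₁sm : ContDiffOn ℝ (⊤ : ℕ∞) (JJ F₁sq) (SS n₁))
  (h₂sm : ContDiffOn ℝ (⊤ : ℕ∞) (JJ F₂sq) (SS n₂))
  (hWFsq : ∀ b w, WFsq b w =
      (f₂ (b ∘ Sum.inr)) ^ 2 * F₁sq (b ∘ Sum.inl) (w ∘ Sum.inl)
        + (f₁ (b ∘ Sum.inl)) ^ 2 * F₂sq (b ∘ Sum.inr) (w ∘ Sum.inr))
  (hpd₁ : ∀ x (y : Fin n₁ → ℝ), y ≠ 0 → ∀ z : Fin n₁ → ℝ, z ≠ 0 →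
      0 < ∑ i, ∑ j, fundG (F₁sq x) i j y * z i * z j)
  (hpd₂ : ∀ u (v : Fin n₂ → ℝ), v ≠ 0 → ∀ z : Fin n₂ → ℝ, z ≠ 0 →
      0 < ∑ α, ∑ β, fundG (F₂sq u) α β v * z α * z β)
  (hf₁ : ∀ x, 0 < f₁ x) (hf₂ : ∀ u, 0 < f₂ u)

include hf₁sm hf₂sm h₁sm h₂sm hWFsq hpd₁ hpd₂ hf₁ hf₂ in
lemma spray_closed1 (b w' : (Fin n₁ ⊕ Fin n₂) → ℝ) (h1 : w' ∘ Sum.inl ≠ 0)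
    (h2 : w' ∘ Sum.inr ≠ 0) (κ : Fin n₂) :
    spray WFsq (Sum.inr κ) b w'
      = AAf F₂sq (f₁ (b ∘ Sum.inl) ^ 2) (b ∘ Sum.inr) κ (w' ∘ Sum.inr)
        + BBf F₂sq (f₁ (b ∘ Sum.inl) ^ 2) (b ∘ Sum.inr) κ (w' ∘ Sum.inr)
            * LinE (fun j => fderiv ℝ (fun t => f₁ t ^ 2) (b ∘ Sum.inl) (Pi.single j 1))
                (w' ∘ Sum.inl)
        + CCf F₂sq (f₁ (b ∘ Sum.inl) ^ 2) (b ∘ Sum.inr) κ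
            (fun γ => fderiv ℝ (fun t => f₂ t ^ 2) (b ∘ Sum.inr) (Pi.single γ 1))
            (w' ∘ Sum.inr)
            * F₁sq (b ∘ Sum.inl) (w' ∘ Sum.inl) := by
  have hw : (b, w') ∈ SW n₁ n₂ := ⟨h1, h2⟩
  have hJW := JW_smooth hf₁sm hf₂sm h₁sm h₂sm hWFsq
  have hfull : ∀ b', (b', w') ∈ SW n₁ n₂ := fun b' => ⟨h1, h2⟩
  have hdet1 : (MM F₁sq (Lam1 n₁ n₂ (b, w'))).det ≠ 0 :=
    det_MM_ne (isOpen_SS n₁) h₁sm h1 (hpd₁ (b ∘ Sum.inl) (w' ∘ Sum.inl) h1)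
  have hdet2 : (MM F₂sq (Lam2 n₁ n₂ (b, w'))).det ≠ 0 :=
    det_MM_ne (isOpen_SS n₂) h₂sm h2 (hpd₂ (b ∘ Sum.inr) (w' ∘ Sum.inr) h2)
  have hf1ne : f₁ (b ∘ Sum.inl) ≠ 0 := ne_of_gt (hf₁ _)
  have hf2ne : f₂ (b ∘ Sum.inr) ≠ 0 := ne_of_gt (hf₂ _)
  have hc1 : (f₁ (b ∘ Sum.inl) ^ 2) ≠ 0 := pow_ne_zero _ hf1ne
  have hinv := MW_inv hf₁sm hf₂sm h₁sm h₂sm hWFsq hw hdet1 hdet2 hf1ne hf2ne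
  rw [L_spray (isOpen_SW n₁ n₂) hJW hfull (Sum.inr κ)]
  rw [Fintype.sum_sum_type]
  have hz : ∀ j : Fin n₁, (MM WFsq (b, w'))⁻¹ (Sum.inr κ) (Sum.inl j) = 0 := by
    intro j; rw [hinv]; simp
  have hsum0 : (∑ j : Fin n₁, (MM WFsq (b, w'))⁻¹ (Sum.inr κ) (Sum.inl j) *
      ((∑ e, Dx e (Dv (Sum.inl j) (JJ WFsq)) (b, w') * w' e)
        - Dx (Sum.inl j) (JJ WFsq) (b, w'))) = 0 := by
    apply Finset.sum_eq_zero
    intro j _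
    rw [hz j, zero_mul]
  rw [hsum0, zero_add]
  have hmain : ∀ h : Fin n₂,
      (MM WFsq (b, w'))⁻¹ (Sum.inr κ) (Sum.inr h) *
        ((∑ e, Dx e (Dv (Sum.inr h) (JJ WFsq)) (b, w') * w' e)
          - Dx (Sum.inr h) (JJ WFsq) (b, w'))
      = ((f₁ (b ∘ Sum.inl) ^ 2)⁻¹ * (MM F₂sq (b ∘ Sum.inr, w' ∘ Sum.inr))⁻¹ κ h)
          * ((∑ γ, (f₁ (b ∘ Sum.inl) ^ 2
                * Dx γ (Dv h (JJ F₂sq)) (b ∘ Sum.inr, w' ∘ Sum.inr)) * w' (Sum.inr γ))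
            - f₁ (b ∘ Sum.inl) ^ 2 * Dx h (JJ F₂sq) (b ∘ Sum.inr, w' ∘ Sum.inr))
        + ((f₁ (b ∘ Sum.inl) ^ 2)⁻¹ * (MM F₂sq (b ∘ Sum.inr, w' ∘ Sum.inr))⁻¹ κ h)
            * Dv h (JJ F₂sq) (b ∘ Sum.inr, w' ∘ Sum.inr)
            * (∑ j, fderiv ℝ (fun t => f₁ t ^ 2) (b ∘ Sum.inl) (Pi.single j 1)
                * w' (Sum.inl j))
        + (-(((f₁ (b ∘ Sum.inl) ^ 2)⁻¹ * (MM F₂sq (b ∘ Sum.inr, w' ∘ Sum.inr))⁻¹ κ h)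
            * fderiv ℝ (fun t => f₂ t ^ 2) (b ∘ Sum.inr) (Pi.single h 1)))
            * F₁sq (b ∘ Sum.inl) (w' ∘ Sum.inl) := by
    intro h
    have hentry : (MM WFsq (b, w'))⁻¹ (Sum.inr κ) (Sum.inr h)
        = (f₁ (b ∘ Sum.inl) ^ 2)⁻¹ * (MM F₂sq (b ∘ Sum.inr, w' ∘ Sum.inr))⁻¹ κ h := by
      rw [hinv, Matrix.fromBlocks_apply₂₂, Matrix.smul_apply, smul_eq_mul]
      rfl
    have hsum_e : (∑ e, Dx e (Dv (Sum.inr h) (JJ WFsq)) (b, w') * w' e)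
        = (∑ γ, (f₁ (b ∘ Sum.inl) ^ 2
              * Dx γ (Dv h (JJ F₂sq)) (b ∘ Sum.inr, w' ∘ Sum.inr)) * w' (Sum.inr γ))
          + Dv h (JJ F₂sq) (b ∘ Sum.inr, w' ∘ Sum.inr)
            * (∑ j, fderiv ℝ (fun t => f₁ t ^ 2) (b ∘ Sum.inl) (Pi.single j 1)
                * w' (Sum.inl j)) := by
      rw [Fintype.sum_sum_type, add_comm]
      congr 1
      · apply Finset.sum_congr rfl
        intro γ _
        rw [dx_dvJW_rr hf₁sm hf₂sm h₁sm h₂sm hWFsq hw γ h]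
        rfl
      · rw [Finset.mul_sum]
        apply Finset.sum_congr rfl
        intro j _
        rw [dx_dvJW_lr hf₁sm hf₂sm h₁sm h₂sm hWFsq hw j h]
        show Dv h (JJ F₂sq) (b ∘ Sum.inr, w' ∘ Sum.inr)
            * fderiv ℝ (fun t => f₁ t ^ 2) (b ∘ Sum.inl) (Pi.single j 1) * w' (Sum.inl j) = _
        ring
    have hdx : Dx (Sum.inr h) (JJ WFsq) (b, w')
        = f₁ (b ∘ Sum.inl) ^ 2 * Dx h (JJ F₂sq) (b ∘ Sum.inr, w' ∘ Sum.inr)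
          + F₁sq (b ∘ Sum.inl) (w' ∘ Sum.inl)
            * fderiv ℝ (fun t => f₂ t ^ 2) (b ∘ Sum.inr) (Pi.single h 1) := by
      rw [dxJW_inr hf₁sm hf₂sm h₁sm h₂sm hWFsq hw h]
      rfl
    rw [hentry, hsum_e, hdx]
    ring
  rw [Finset.sum_congr rfl (fun h _ => hmain h), Finset.sum_add_distrib,
    Finset.sum_add_distrib, ← Finset.sum_mul, ← Finset.sum_mul]
  show (1/4 : ℝ) * _ = _
  rw [AAf, BBf, CCf]
  have hL : LinE (fun j => fderiv ℝ (fun t => f₁ t ^ 2) (b ∘ Sum.inl) (Pi.single j 1))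
      (w' ∘ Sum.inl) = ∑ j, fderiv ℝ (fun t => f₁ t ^ 2) (b ∘ Sum.inl) (Pi.single j 1)
        * w' (Sum.inl j) := by
    rw [LinE_apply]
    rfl
  rw [hL]
  have hyj : ∀ γ : Fin n₂, (w' ∘ Sum.inr) γ = w' (Sum.inr γ) := fun _ => rfl
  simp only [hyj]
  ring

end Closed1

section Key
variable {n₁ n₂ : ℕ}
  {F₁sq : (Fin n₁ → ℝ) → (Fin n₁ → ℝ) → ℝ}
  {F₂sq : (Fin n₂ → ℝ) → (Fin n₂ → ℝ) → ℝ}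
  {f₁ : (Fin n₁ → ℝ) → ℝ} {f₂ : (Fin n₂ → ℝ) → ℝ}
  {WFsq : ((Fin n₁ ⊕ Fin n₂) → ℝ) → ((Fin n₁ ⊕ Fin n₂) → ℝ) → ℝ}
  (hf₁sm : ContDiff ℝ (⊤ : ℕ∞) f₁) (hf₂sm : ContDiff ℝ (⊤ : ℕ∞) f₂)
  (h₁sm : ContDiffOn ℝ (⊤ : ℕ∞) (JJ F₁sq) (SS n₁))
  (h₂sm : ContDiffOn ℝ (⊤ : ℕ∞) (JJ F₂sq) (SS n₂))
  (hWFsq : ∀ b w, WFsq b w =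
      (f₂ (b ∘ Sum.inr)) ^ 2 * F₁sq (b ∘ Sum.inl) (w ∘ Sum.inl)
        + (f₁ (b ∘ Sum.inl)) ^ 2 * F₂sq (b ∘ Sum.inr) (w ∘ Sum.inr))
  (hpd₁ : ∀ x (y : Fin n₁ → ℝ), y ≠ 0 → ∀ z : Fin n₁ → ℝ, z ≠ 0 →
      0 < ∑ i, ∑ j, fundG (F₁sq x) i j y * z i * z j)
  (hpd₂ : ∀ u (v : Fin n₂ → ℝ), v ≠ 0 → ∀ z : Fin n₂ → ℝ, z ≠ 0 →
      0 < ∑ α, ∑ β, fundG (F₂sq u) α β v * z α * z β)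
  (hf₁ : ∀ x, 0 < f₁ x) (hf₂ : ∀ u, 0 < f₂ u)
  (hB : ∀ (b w : (Fin n₁ ⊕ Fin n₂) → ℝ), w ∘ Sum.inl ≠ 0 → w ∘ Sum.inr ≠ 0 →
      ∀ a c d e : Fin n₁ ⊕ Fin n₂,
        pd c (fun w' => pd d (fun w'' => pd e (spray WFsq a b) w'') w') w = 0)

include hf₁sm hf₂sm h₁sm h₂sm hWFsq hpd₁ hpd₂ hf₁ hf₂ hB in
lemma keyC2 (hn₁ : 0 < n₁) (hproper₁ : ∃ x₁ x₂, f₁ x₁ ≠ f₁ x₂) :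
    ∀ u (v : Fin n₂ → ℝ), v ≠ 0 → ∀ α β γ, cart (F₂sq u) α β γ v = 0 := by
  by_contra hcon
  push_neg at hcon
  obtain ⟨u, v, hv, α, β, lam, hcart⟩ := hcon
  have hc2 : (f₂ u ^ 2 : ℝ) ≠ 0 := pow_ne_zero _ (ne_of_gt (hf₂ u))
  have hclaim : ∀ (x y : Fin n₁ → ℝ), y ≠ 0 → ∀ k : Fin n₁,
      ∑ h, (MM F₁sq (x, y))⁻¹ k h * fderiv ℝ (fun t => f₁ t ^ 2) x (Pi.single h 1) = 0 := by
    intro x y hy k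
    set D : Fin n₁ → ℝ := fun h => fderiv ℝ (fun t => f₁ t ^ 2) x (Pi.single h 1) with hD
    set b : (Fin n₁ ⊕ Fin n₂) → ℝ := Sum.elim x u with hbdef
    set w : (Fin n₁ ⊕ Fin n₂) → ℝ := Sum.elim y v with hwdef
    have hbl : b ∘ Sum.inl = x := rfl
    have hbr : b ∘ Sum.inr = u := rfl
    have hwl : w ∘ Sum.inl = y := rfl
    have hwr : w ∘ Sum.inr = v := rfl
    have hρ : ∀ q ∈ {q : (Fin n₁ ⊕ Fin n₂) → ℝ |
        prL (Fin n₁) (Fin n₂) q ≠ 0 ∧ prR (Fin n₁) (Fin n₂) q ≠ 0},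
        spray WFsq (Sum.inl k) b q
          = AAf F₁sq (f₂ u ^ 2) x k (prL (Fin n₁) (Fin n₂) q)
            + BBf F₁sq (f₂ u ^ 2) x k (prL (Fin n₁) (Fin n₂) q)
              * (LinE (fun γ => fderiv ℝ (fun t => f₂ t ^ 2) u (Pi.single γ 1)))
                  (prR (Fin n₁) (Fin n₂) q)
            + CCf F₁sq (f₂ u ^ 2) x k D (prL (Fin n₁) (Fin n₂) q)
              * JJ F₂sq (u, prR (Fin n₁) (Fin n₂) q) := by
      intro q hq
      have := spray_closed2 hf₁sm hf₂sm h₁sm h₂sm hWFsq hpd₁ hpd₂ hf₁ hf₂ b q hq.1 hq.2 k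
      exact this
    have hw1 : prL (Fin n₁) (Fin n₂) w ≠ 0 := hy
    have hw2 : prR (Fin n₁) (Fin n₂) w ≠ 0 := hv
    have htrip := tripleMain (prL (Fin n₁) (Fin n₂)) (prR (Fin n₁) (Fin n₂)) u
      (smooth_AAf h₁sm x (hpd₁ x) (f₂ u ^ 2) k)
      (smooth_BBf h₁sm x (hpd₁ x) (f₂ u ^ 2) k)
      (smooth_CCf h₁sm x (hpd₁ x) (f₂ u ^ 2) k D)
      (LinE (fun γ => fderiv ℝ (fun t => f₂ t ^ 2) u (Pi.single γ 1))) h₂sm hρ hw1 hw2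
      (c := lam) (d := α) (e := β)
      (zc := Pi.single (Sum.inr lam) 1) (zd := Pi.single (Sum.inr α) 1)
      (ze := Pi.single (Sum.inr β) 1)
      (prL_single_inr lam) (prR_single_inr lam)
      (prL_single_inr α) (prR_single_inr α)
      (prL_single_inr β) (prR_single_inr β)
    have hBz := hB b w hy hv (Sum.inl k) (Sum.inr lam) (Sum.inr α) (Sum.inr β)
    have hzero : CCf F₁sq (f₂ u ^ 2) x k D y
        * DP (0, Pi.single lam 1) (DP (0, Pi.single α 1)
            (DP (0, Pi.single β 1) (JJ F₂sq))) (u, v) = 0 := htrip.symm.trans hBz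
    have hcart_eq : cart (F₂sq u) α β lam v
        = (1/4 : ℝ) * DP (0, Pi.single lam 1) (DP (0, Pi.single α 1)
            (DP (0, Pi.single β 1) (JJ F₂sq))) (u, v) :=
      L_cart (isOpen_SS n₂) h₂sm hv α β lam
    have hCC : CCf F₁sq (f₂ u ^ 2) x k D y = 0 := by
      rcases mul_eq_zero.mp hzero with h | h
      · exact h
      · exfalso; apply hcart; rw [hcart_eq, h]; ring
    have hsum : ∑ h, -((f₂ u ^ 2)⁻¹ * (MM F₁sq (x, y))⁻¹ k h * D h) = 0 := by
      have : (1/4 : ℝ) * ∑ h, -((f₂ u ^ 2)⁻¹ * (MM F₁sq (x, y))⁻¹ k h * D h) = 0 := hCC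
      linarith
    have hfact : ∑ h, -((f₂ u ^ 2)⁻¹ * (MM F₁sq (x, y))⁻¹ k h * D h)
        = -((f₂ u ^ 2)⁻¹ * ∑ h, (MM F₁sq (x, y))⁻¹ k h * D h) := by
      rw [Finset.mul_sum, ← Finset.sum_neg_distrib]
      exact Finset.sum_congr rfl (fun h _ => by ring)
    rw [hfact] at hsum
    have := neg_eq_zero.mp hsum
    rcases mul_eq_zero.mp this with h | h
    · exact absurd h (inv_ne_zero hc2)
    · exact h
  -- conclude f₁² is constant
  obtain ⟨x₁, x₂, hprop⟩ := hproper₁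
  have hDzero : ∀ x, fderiv ℝ (fun t => f₁ t ^ 2) x = 0 := by
    intro x
    have hy0 : (Pi.single (⟨0, hn₁⟩ : Fin n₁) 1 : Fin n₁ → ℝ) ≠ 0 := by
      intro h0
      have := congrFun h0 ⟨0, hn₁⟩
      simp at this
    have hdet := det_MM_ne (isOpen_SS n₁) h₁sm (x := x) hy0
      (hpd₁ x _ hy0)
    have hvec := vec_eq_zero_of_inv_mulVec hdet (fun k => hclaim x _ hy0 k)
    apply ContinuousLinearMap.ext
    intro vv
    have h0 : ∀ i, fderiv ℝ (fun t => f₁ t ^ 2) x (Pi.single i 1) = 0 :=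
      fun i => congrFun hvec i
    rw [clm_eq_zero_of_single _ h0 vv]
    rfl
  have hconst := is_const_of_fderiv_eq_zero (𝕜 := ℝ)
    ((hf₁sm.pow 2).differentiable (by simp)) hDzero
  have h12 : f₁ x₁ ^ 2 = f₁ x₂ ^ 2 := hconst x₁ x₂
  have : f₁ x₁ = f₁ x₂ := by nlinarith [hf₁ x₁, hf₁ x₂]
  exact hprop this

include hf₁sm hf₂sm h₁sm h₂sm hWFsq hpd₁ hpd₂ hf₁ hf₂ hB in
lemma keyC1 (hn₂ : 0 < n₂) (hproper₂ : ∃ u₁ u₂, f₂ u₁ ≠ f₂ u₂) :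
    ∀ x (y : Fin n₁ → ℝ), y ≠ 0 → ∀ i j k, cart (F₁sq x) i j k y = 0 := by
  by_contra hcon
  push_neg at hcon
  obtain ⟨x, y, hy, ii, jj, kk, hcart⟩ := hcon
  have hc1 : (f₁ x ^ 2 : ℝ) ≠ 0 := pow_ne_zero _ (ne_of_gt (hf₁ x))
  have hclaim : ∀ (u v : Fin n₂ → ℝ), v ≠ 0 → ∀ κ : Fin n₂,
      ∑ h, (MM F₂sq (u, v))⁻¹ κ h * fderiv ℝ (fun t => f₂ t ^ 2) u (Pi.single h 1) = 0 := by
    intro u v hv κ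
    set D : Fin n₂ → ℝ := fun h => fderiv ℝ (fun t => f₂ t ^ 2) u (Pi.single h 1) with hD
    set b : (Fin n₁ ⊕ Fin n₂) → ℝ := Sum.elim x u with hbdef
    set w : (Fin n₁ ⊕ Fin n₂) → ℝ := Sum.elim y v with hwdef
    have hρ : ∀ q ∈ {q : (Fin n₁ ⊕ Fin n₂) → ℝ |
        prR (Fin n₁) (Fin n₂) q ≠ 0 ∧ prL (Fin n₁) (Fin n₂) q ≠ 0},
        spray WFsq (Sum.inr κ) b q
          = AAf F₂sq (f₁ x ^ 2) u κ (prR (Fin n₁) (Fin n₂) q)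
            + BBf F₂sq (f₁ x ^ 2) u κ (prR (Fin n₁) (Fin n₂) q)
              * (LinE (fun j => fderiv ℝ (fun t => f₁ t ^ 2) x (Pi.single j 1)))
                  (prL (Fin n₁) (Fin n₂) q)
            + CCf F₂sq (f₁ x ^ 2) u κ D (prR (Fin n₁) (Fin n₂) q)
              * JJ F₁sq (x, prL (Fin n₁) (Fin n₂) q) := by
      intro q hq
      have := spray_closed1 hf₁sm hf₂sm h₁sm h₂sm hWFsq hpd₁ hpd₂ hf₁ hf₂ b q hq.2 hq.1 κ
      exact this
    have hw1 : prR (Fin n₁) (Fin n₂) w ≠ 0 := hv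
    have hw2 : prL (Fin n₁) (Fin n₂) w ≠ 0 := hy
    have htrip := tripleMain (prR (Fin n₁) (Fin n₂)) (prL (Fin n₁) (Fin n₂)) x
      (smooth_AAf h₂sm u (hpd₂ u) (f₁ x ^ 2) κ)
      (smooth_BBf h₂sm u (hpd₂ u) (f₁ x ^ 2) κ)
      (smooth_CCf h₂sm u (hpd₂ u) (f₁ x ^ 2) κ D)
      (LinE (fun j => fderiv ℝ (fun t => f₁ t ^ 2) x (Pi.single j 1))) h₁sm hρ hw1 hw2
      (c := kk) (d := ii) (e := jj)
      (zc := Pi.single (Sum.inl kk) 1) (zd := Pi.single (Sum.inl ii) 1)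
      (ze := Pi.single (Sum.inl jj) 1)
      (prR_single_inl kk) (prL_single_inl kk)
      (prR_single_inl ii) (prL_single_inl ii)
      (prR_single_inl jj) (prL_single_inl jj)
    have hBz := hB b w hy hv (Sum.inr κ) (Sum.inl kk) (Sum.inl ii) (Sum.inl jj)
    have hzero : CCf F₂sq (f₁ x ^ 2) u κ D v
        * DP (0, Pi.single kk 1) (DP (0, Pi.single ii 1)
            (DP (0, Pi.single jj 1) (JJ F₁sq))) (x, y) = 0 := htrip.symm.trans hBz
    have hcart_eq : cart (F₁sq x) ii jj kk y
        = (1/4 : ℝ) * DP (0, Pi.single kk 1) (DP (0, Pi.single ii 1)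
            (DP (0, Pi.single jj 1) (JJ F₁sq))) (x, y) :=
      L_cart (isOpen_SS n₁) h₁sm hy ii jj kk
    have hCC : CCf F₂sq (f₁ x ^ 2) u κ D v = 0 := by
      rcases mul_eq_zero.mp hzero with h | h
      · exact h
      · exfalso; apply hcart; rw [hcart_eq, h]; ring
    have hsum : ∑ h, -((f₁ x ^ 2)⁻¹ * (MM F₂sq (u, v))⁻¹ κ h * D h) = 0 := by
      have : (1/4 : ℝ) * ∑ h, -((f₁ x ^ 2)⁻¹ * (MM F₂sq (u, v))⁻¹ κ h * D h) = 0 := hCC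
      linarith
    have hfact : ∑ h, -((f₁ x ^ 2)⁻¹ * (MM F₂sq (u, v))⁻¹ κ h * D h)
        = -((f₁ x ^ 2)⁻¹ * ∑ h, (MM F₂sq (u, v))⁻¹ κ h * D h) := by
      rw [Finset.mul_sum, ← Finset.sum_neg_distrib]
      exact Finset.sum_congr rfl (fun h _ => by ring)
    rw [hfact] at hsum
    have := neg_eq_zero.mp hsum
    rcases mul_eq_zero.mp this with h | h
    · exact absurd h (inv_ne_zero hc1)
    · exact h
  obtain ⟨u₁, u₂, hprop⟩ := hproper₂
  have hDzero : ∀ u, fderiv ℝ (fun t => f₂ t ^ 2) u = 0 := by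
    intro u
    have hy0 : (Pi.single (⟨0, hn₂⟩ : Fin n₂) 1 : Fin n₂ → ℝ) ≠ 0 := by
      intro h0
      have := congrFun h0 ⟨0, hn₂⟩
      simp at this
    have hdet := det_MM_ne (isOpen_SS n₂) h₂sm (x := u) hy0 (hpd₂ u _ hy0)
    have hvec := vec_eq_zero_of_inv_mulVec hdet (fun κ => hclaim u _ hy0 κ)
    apply ContinuousLinearMap.ext
    intro vv
    have h0 : ∀ i, fderiv ℝ (fun t => f₂ t ^ 2) u (Pi.single i 1) = 0 :=
      fun i => congrFun hvec i
    rw [clm_eq_zero_of_single _ h0 vv]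
    rfl
  have hconst := is_const_of_fderiv_eq_zero (𝕜 := ℝ)
    ((hf₂sm.pow 2).differentiable (by simp)) hDzero
  have h12 : f₂ u₁ ^ 2 = f₂ u₂ ^ 2 := hconst u₁ u₂
  have : f₂ u₁ = f₂ u₂ := by nlinarith [hf₂ u₁, hf₂ u₂]
  exact hprop this

end Key

section Part3
variable {n₁ n₂ : ℕ}
  {F₁sq : (Fin n₁ → ℝ) → (Fin n₁ → ℝ) → ℝ}
  {F₂sq : (Fin n₂ → ℝ) → (Fin n₂ → ℝ) → ℝ}
  {f₁ : (Fin n₁ → ℝ) → ℝ} {f₂ : (Fin n₂ → ℝ) → ℝ}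
  {WFsq : ((Fin n₁ ⊕ Fin n₂) → ℝ) → ((Fin n₁ ⊕ Fin n₂) → ℝ) → ℝ}
  (hf₁sm : ContDiff ℝ (⊤ : ℕ∞) f₁) (hf₂sm : ContDiff ℝ (⊤ : ℕ∞) f₂)
  (h₁sm : ContDiffOn ℝ (⊤ : ℕ∞) (JJ F₁sq) (SS n₁))
  (h₂sm : ContDiffOn ℝ (⊤ : ℕ∞) (JJ F₂sq) (SS n₂))
  (hWFsq : ∀ b w, WFsq b w =
      (f₂ (b ∘ Sum.inr)) ^ 2 * F₁sq (b ∘ Sum.inl) (w ∘ Sum.inl)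
        + (f₁ (b ∘ Sum.inl)) ^ 2 * F₂sq (b ∘ Sum.inr) (w ∘ Sum.inr))

include hf₁sm hf₂sm h₁sm h₂sm hWFsq in
lemma dp_dv2JW_ll {p} (hp : p ∈ SW n₁ n₂) (i h : Fin n₁) (z) :
    DP z (Dv (Sum.inl i) (Dv (Sum.inl h) (JJ WFsq))) p
      = f₂ (prR (Fin n₁) (Fin n₂) p.1) ^ 2
          * DP (Lam1 n₁ n₂ z) (Dv i (Dv h (JJ F₁sq))) (Lam1 n₁ n₂ p)
        + Dv i (Dv h (JJ F₁sq)) (Lam1 n₁ n₂ p) * fderiv ℝ (fun t => f₂ t ^ 2)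
            (prR (Fin n₁) (Fin n₂) p.1) (prR (Fin n₁) (Fin n₂) z.1) := by
  have hφ₂ : Differentiable ℝ (fun t => f₂ t ^ 2) := (hf₂sm.pow 2).differentiable (by simp)
  have hdv : DifferentiableAt ℝ (Dv i (Dv h (JJ F₁sq))) (Lam1 n₁ n₂ p) :=
    diffAt_of_contDiffOn (isOpen_SS n₁)
      (dp_contDiffOn (isOpen_SS n₁) (dp_contDiffOn (isOpen_SS n₁) h₁sm _) _) hp.1
  have hcong : ∀ q ∈ SW n₁ n₂, Dv (Sum.inl i) (Dv (Sum.inl h) (JJ WFsq)) q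
      = (fun q' => (fun t => f₂ t ^ 2) ((prR (Fin n₁) (Fin n₂)).comp
          (ContinuousLinearMap.fst ℝ _ _) q') * Dv i (Dv h (JJ F₁sq)) (Lam1 n₁ n₂ q')) q :=
    fun q hq => dv_dvJW_ll hf₁sm hf₂sm h₁sm h₂sm hWFsq hq i h
  rw [dp_congr_on (isOpen_SW n₁ n₂) hcong hp z, dp_warp_term _ hφ₂ _ _ _ hdv z]
  rfl

include hf₁sm hf₂sm h₁sm h₂sm hWFsq in
lemma dp_dv2JW_rr {p} (hp : p ∈ SW n₁ n₂) (α β : Fin n₂) (z) :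
    DP z (Dv (Sum.inr α) (Dv (Sum.inr β) (JJ WFsq))) p
      = f₁ (prL (Fin n₁) (Fin n₂) p.1) ^ 2
          * DP (Lam2 n₁ n₂ z) (Dv α (Dv β (JJ F₂sq))) (Lam2 n₁ n₂ p)
        + Dv α (Dv β (JJ F₂sq)) (Lam2 n₁ n₂ p) * fderiv ℝ (fun t => f₁ t ^ 2)
            (prL (Fin n₁) (Fin n₂) p.1) (prL (Fin n₁) (Fin n₂) z.1) := by
  have hφ₁ : Differentiable ℝ (fun t => f₁ t ^ 2) := (hf₁sm.pow 2).differentiable (by simp)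
  have hdv : DifferentiableAt ℝ (Dv α (Dv β (JJ F₂sq))) (Lam2 n₁ n₂ p) :=
    diffAt_of_contDiffOn (isOpen_SS n₂)
      (dp_contDiffOn (isOpen_SS n₂) (dp_contDiffOn (isOpen_SS n₂) h₂sm _) _) hp.2
  have hcong : ∀ q ∈ SW n₁ n₂, Dv (Sum.inr α) (Dv (Sum.inr β) (JJ WFsq)) q
      = (fun q' => (fun t => f₁ t ^ 2) ((prL (Fin n₁) (Fin n₂)).comp
          (ContinuousLinearMap.fst ℝ _ _) q') * Dv α (Dv β (JJ F₂sq)) (Lam2 n₁ n₂ q')) q :=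
    fun q hq => dv_dvJW_rr hf₁sm hf₂sm h₁sm h₂sm hWFsq hq α β
  rw [dp_congr_on (isOpen_SW n₁ n₂) hcong hp z, dp_warp_term _ hφ₁ _ _ _ hdv z]
  rfl

include hf₁sm hf₂sm h₁sm h₂sm hWFsq in
lemma dp_dv2JW_rl {p} (hp : p ∈ SW n₁ n₂) (β : Fin n₂) (h : Fin n₁) (z) :
    DP z (Dv (Sum.inr β) (Dv (Sum.inl h) (JJ WFsq))) p = 0 := by
  have hcong : ∀ q ∈ SW n₁ n₂, Dv (Sum.inr β) (Dv (Sum.inl h) (JJ WFsq)) q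
      = (fun _ => (0:ℝ)) q :=
    fun q hq => dv_dvJW_rl hf₁sm hf₂sm h₁sm h₂sm hWFsq hq β h
  rw [dp_congr_on (isOpen_SW n₁ n₂) hcong hp z, dp_const]

include hf₁sm hf₂sm h₁sm h₂sm hWFsq in
lemma dp_dv2JW_lr {p} (hp : p ∈ SW n₁ n₂) (i : Fin n₁) (β : Fin n₂) (z) :
    DP z (Dv (Sum.inl i) (Dv (Sum.inr β) (JJ WFsq))) p = 0 := by
  have hcong : ∀ q ∈ SW n₁ n₂, Dv (Sum.inl i) (Dv (Sum.inr β) (JJ WFsq)) q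
      = (fun _ => (0:ℝ)) q :=
    fun q hq => dv_dvJW_lr hf₁sm hf₂sm h₁sm h₂sm hWFsq hq i β
  rw [dp_congr_on (isOpen_SW n₁ n₂) hcong hp z, dp_const]

include hf₁sm hf₂sm h₁sm h₂sm hWFsq in
lemma cartW
    (hC1 : ∀ x (y : Fin n₁ → ℝ), y ≠ 0 → ∀ i j k, cart (F₁sq x) i j k y = 0)
    (hC2 : ∀ u (v : Fin n₂ → ℝ), v ≠ 0 → ∀ α β γ, cart (F₂sq u) α β γ v = 0) :
    ∀ (b w : (Fin n₁ ⊕ Fin n₂) → ℝ), w ∘ Sum.inl ≠ 0 → w ∘ Sum.inr ≠ 0 →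
      ∀ a c d, cart (WFsq b) a c d w = 0 := by
  intro b w h1 h2 a c d
  have hw : (b, w) ∈ SW n₁ n₂ := ⟨h1, h2⟩
  have hJW := JW_smooth hf₁sm hf₂sm h₁sm h₂sm hWFsq
  rw [L_cart (isOpen_SW n₁ n₂) hJW hw a c d]
  suffices hs : Dv d (Dv a (Dv c (JJ WFsq))) (b, w) = 0 by rw [hs]; ring
  cases c with
  | inl h' =>
    cases a with
    | inl i =>
      cases d with
      | inl r =>
        have := dp_dv2JW_ll hf₁sm hf₂sm h₁sm h₂sm hWFsq hw i h'
          (0, Pi.single (Sum.inl r) 1)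
        rw [Lam1_vinl] at this
        have hz : Dv r (Dv i (Dv h' (JJ F₁sq))) (b ∘ Sum.inl, w ∘ Sum.inl) = 0 := by
          have hcc := L_cart (isOpen_SS n₁) h₁sm (x := b ∘ Sum.inl) (y := w ∘ Sum.inl)
            h1 i h' r
          rw [hC1 (b ∘ Sum.inl) (w ∘ Sum.inl) h1 i h' r] at hcc
          have := hcc.symm
          linarith
        show DP (0, Pi.single (Sum.inl r) 1)
          (Dv (Sum.inl i) (Dv (Sum.inl h') (JJ WFsq))) (b, w) = 0
        rw [this]
        show f₂ (prR (Fin n₁) (Fin n₂) (b, w).1) ^ 2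
          * Dv r (Dv i (Dv h' (JJ F₁sq))) (Lam1 n₁ n₂ (b, w)) + _ = 0
        have hz' : Dv r (Dv i (Dv h' (JJ F₁sq))) (Lam1 n₁ n₂ (b, w)) = 0 := hz
        rw [hz']
        simp
      | inr γ =>
        have := dp_dv2JW_ll hf₁sm hf₂sm h₁sm h₂sm hWFsq hw i h'
          (0, Pi.single (Sum.inr γ) 1)
        rw [Lam1_vinr] at this
        show DP (0, Pi.single (Sum.inr γ) 1)
          (Dv (Sum.inl i) (Dv (Sum.inl h') (JJ WFsq))) (b, w) = 0
        rw [this, dp_zero]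
        simp
    | inr β =>
      exact dp_dv2JW_rl hf₁sm hf₂sm h₁sm h₂sm hWFsq hw β h' (0, Pi.single d 1)
  | inr β' =>
    cases a with
    | inl i =>
      exact dp_dv2JW_lr hf₁sm hf₂sm h₁sm h₂sm hWFsq hw i β' (0, Pi.single d 1)
    | inr α' =>
      cases d with
      | inr s =>
        have := dp_dv2JW_rr hf₁sm hf₂sm h₁sm h₂sm hWFsq hw α' β'
          (0, Pi.single (Sum.inr s) 1)
        rw [Lam2_vinr] at this
        have hz : Dv s (Dv α' (Dv β' (JJ F₂sq))) (b ∘ Sum.inr, w ∘ Sum.inr) = 0 := by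
          have hcc := L_cart (isOpen_SS n₂) h₂sm (x := b ∘ Sum.inr) (y := w ∘ Sum.inr)
            h2 α' β' s
          rw [hC2 (b ∘ Sum.inr) (w ∘ Sum.inr) h2 α' β' s] at hcc
          have := hcc.symm
          linarith
        show DP (0, Pi.single (Sum.inr s) 1)
          (Dv (Sum.inr α') (Dv (Sum.inr β') (JJ WFsq))) (b, w) = 0
        rw [this]
        show f₁ (prL (Fin n₁) (Fin n₂) (b, w).1) ^ 2
          * Dv s (Dv α' (Dv β' (JJ F₂sq))) (Lam2 n₁ n₂ (b, w)) + _ = 0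
        have hz' : Dv s (Dv α' (Dv β' (JJ F₂sq))) (Lam2 n₁ n₂ (b, w)) = 0 := hz
        rw [hz']
        simp
      | inl r =>
        have := dp_dv2JW_rr hf₁sm hf₂sm h₁sm h₂sm hWFsq hw α' β'
          (0, Pi.single (Sum.inl r) 1)
        rw [Lam2_vinl] at this
        show DP (0, Pi.single (Sum.inl r) 1)
          (Dv (Sum.inr α') (Dv (Sum.inr β') (JJ WFsq))) (b, w) = 0
        rw [this, dp_zero]
        simp

end Part3

/-- A proper doubly warped product Finsler manifold with
vanishing Berwald curvature is Riemannian: both Cartan tensors `C¹`, `C²`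
vanish, hence the Cartan tensor of `F` vanishes. -/
theorem stmt14 {n₁ n₂ : ℕ} (hn₁ : 0 < n₁) (hn₂ : 0 < n₂)
    (F₁sq : (Fin n₁ → ℝ) → (Fin n₁ → ℝ) → ℝ)
    (F₂sq : (Fin n₂ → ℝ) → (Fin n₂ → ℝ) → ℝ)
    (f₁ : (Fin n₁ → ℝ) → ℝ) (f₂ : (Fin n₂ → ℝ) → ℝ)
    (hf₁ : ∀ x, 0 < f₁ x) (hf₂ : ∀ u, 0 < f₂ u)
    (hf₁sm : ContDiff ℝ (⊤ : ℕ∞) f₁) (hf₂sm : ContDiff ℝ (⊤ : ℕ∞) f₂)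
    (h₁sm : ContDiffOn ℝ (⊤ : ℕ∞) (fun p : (Fin n₁ → ℝ) × (Fin n₁ → ℝ) => F₁sq p.1 p.2)
      {p : (Fin n₁ → ℝ) × (Fin n₁ → ℝ) | p.2 ≠ 0})
    (h₂sm : ContDiffOn ℝ (⊤ : ℕ∞) (fun p : (Fin n₂ → ℝ) × (Fin n₂ → ℝ) => F₂sq p.1 p.2)
      {p : (Fin n₂ → ℝ) × (Fin n₂ → ℝ) | p.2 ≠ 0})
    (hhom₁ : ∀ c : ℝ, 0 < c → ∀ x y, F₁sq x (c • y) = c ^ 2 * F₁sq x y)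
    (hhom₂ : ∀ c : ℝ, 0 < c → ∀ u v, F₂sq u (c • v) = c ^ 2 * F₂sq u v)
    (hpd₁ : ∀ x (y : Fin n₁ → ℝ), y ≠ 0 → ∀ z : Fin n₁ → ℝ, z ≠ 0 →
      0 < ∑ i, ∑ j, fundG (F₁sq x) i j y * z i * z j)
    (hpd₂ : ∀ u (v : Fin n₂ → ℝ), v ≠ 0 → ∀ z : Fin n₂ → ℝ, z ≠ 0 →
      0 < ∑ α, ∑ β, fundG (F₂sq u) α β v * z α * z β)
    -- proper: neither warping function is constant
    (hproper₁ : ∃ x₁ x₂, f₁ x₁ ≠ f₁ x₂) (hproper₂ : ∃ u₁ u₂, f₂ u₁ ≠ f₂ u₂)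
    (WFsq : ((Fin n₁ ⊕ Fin n₂) → ℝ) → ((Fin n₁ ⊕ Fin n₂) → ℝ) → ℝ)
    (hWFsq : ∀ b w, WFsq b w =
      (f₂ (b ∘ Sum.inr)) ^ 2 * F₁sq (b ∘ Sum.inl) (w ∘ Sum.inl)
        + (f₁ (b ∘ Sum.inl)) ^ 2 * F₂sq (b ∘ Sum.inr) (w ∘ Sum.inr))
    -- vanishing Berwald curvature of the doubly warped metric
    (hB : ∀ (b w : (Fin n₁ ⊕ Fin n₂) → ℝ), w ∘ Sum.inl ≠ 0 → w ∘ Sum.inr ≠ 0 →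
      ∀ a c d e : Fin n₁ ⊕ Fin n₂,
        pd c (fun w' => pd d (fun w'' => pd e (spray WFsq a b) w'') w') w = 0) :
    (∀ x (y : Fin n₁ → ℝ), y ≠ 0 → ∀ i j k, cart (F₁sq x) i j k y = 0) ∧
    (∀ u (v : Fin n₂ → ℝ), v ≠ 0 → ∀ α β γ, cart (F₂sq u) α β γ v = 0) ∧
    (∀ (b w : (Fin n₁ ⊕ Fin n₂) → ℝ), w ∘ Sum.inl ≠ 0 → w ∘ Sum.inr ≠ 0 →
      ∀ a c d, cart (WFsq b) a c d w = 0) := by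
  have h₁sm' : ContDiffOn ℝ (⊤ : ℕ∞) (JJ F₁sq) (SS n₁) := h₁sm
  have h₂sm' : ContDiffOn ℝ (⊤ : ℕ∞) (JJ F₂sq) (SS n₂) := h₂sm
  have hC1 := keyC1 hf₁sm hf₂sm h₁sm' h₂sm' hWFsq hpd₁ hpd₂ hf₁ hf₂ hB hn₂ hproper₂
  have hC2 := keyC2 hf₁sm hf₂sm h₁sm' h₂sm' hWFsq hpd₁ hpd₂ hf₁ hf₂ hB hn₁ hproper₁
  exact ⟨hC1, hC2, cartW hf₁sm hf₂sm h₁sm' h₂sm' hWFsq hC1 hC2⟩
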